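/- arXiv:2206.07426 — 9 statements merged into one kernel-verified Lean document; each statement's English description precedes it below -/
import Mathlib

section
/- If G = (V,E) is a (2,2)-circuit, i.e. |E| = 2|V| - 1 and every proper subgraph (V',E') with E' nonempty satisfies |E'| ≤ 2|V'| - 2, then the minimum degree of G is exactly 3. -/
/-!
Deleting a vertex `v` leaves a proper subgraph with `|E| - deg v` edges on `|V| - 1` vertices;
it has an edge because `deg v < |V|`, so the sparsity bound gives `deg v ≥ 3`. On the other hand
the degree sum `2|E| = 4|V| - 2` is less than `4|V|`, so some vertex has degree at most `3`.
-/

/-- A graph `G` on the finite vertex type `V` is a `(2,2)`-circuit if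
`|E| = 2|V| - 1` and every proper subgraph `(V',E')` with `E'` nonempty
satisfies `|E'| ≤ 2|V'| - 2`. -/
def IsCircuit22 {V : Type*} [Fintype V] (G : SimpleGraph V) : Prop :=
  G.edgeSet.ncard + 1 = 2 * Fintype.card V ∧
  ∀ H : G.Subgraph, (H.verts ≠ Set.univ ∨ H.edgeSet ≠ G.edgeSet) →
    H.edgeSet.Nonempty → H.edgeSet.ncard + 2 ≤ 2 * H.verts.ncard

namespace SimpleGraph

variable {V : Type*} (G : SimpleGraph V)

lemma spanningCoe_deleteVerts_singleton_top (v : V) :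
    ((⊤ : G.Subgraph).deleteVerts {v}).spanningCoe = G.deleteIncidenceSet v := by
  ext a b
  simp only [Subgraph.spanningCoe_adj, Subgraph.deleteVerts_adj, Subgraph.top_adj,
    deleteIncidenceSet_adj, Subgraph.verts_top, Set.mem_univ, Set.mem_singleton_iff]
  tauto

lemma ncard_edgeSet_deleteVerts_singleton_top [Fintype V] [DecidableRel G.Adj] (v : V) :
    ((⊤ : G.Subgraph).deleteVerts {v}).edgeSet.ncard = G.edgeSet.ncard - G.degree v := by
  classical
  rw [← Subgraph.edgeSet_spanningCoe, spanningCoe_deleteVerts_singleton_top,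
    ← coe_edgeFinset, Set.ncard_coe_finset, card_edgeFinset_deleteIncidenceSet,
    ← coe_edgeFinset, Set.ncard_coe_finset]

lemma ncard_verts_deleteVerts_singleton_top [Fintype V] (v : V) :
    ((⊤ : G.Subgraph).deleteVerts {v}).verts.ncard = Fintype.card V - 1 := by
  rw [Subgraph.deleteVerts_verts, Subgraph.verts_top, Set.ncard_sdiff_singleton_of_mem
    (Set.mem_univ v), Set.ncard_univ, Nat.card_eq_fintype_card]

lemma exists_degree_lt_of_two_mul_card_edgeFinset_lt [Fintype V] [DecidableRel G.Adj] {k : ℕ}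
    (h : 2 * G.edgeFinset.card < k * Fintype.card V) : ∃ v, G.degree v < k := by
  by_contra! hk
  have : k * Fintype.card V ≤ ∑ v, G.degree v := by
    simpa [mul_comm] using Finset.card_nsmul_le_sum Finset.univ _ k (fun v _ ↦ hk v)
  rw [sum_degrees_eq_twice_card_edges] at this
  omega

end SimpleGraph

open SimpleGraph

namespace IsCircuit22

variable {V : Type*} [Fintype V] {G : SimpleGraph V} [DecidableRel G.Adj]

theorem three_le_degree (hG : IsCircuit22 G) (v : V) : 3 ≤ G.degree v := by
  set H := (⊤ : G.Subgraph).deleteVerts {v}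
  have hE : H.edgeSet.ncard = G.edgeSet.ncard - G.degree v :=
    G.ncard_edgeSet_deleteVerts_singleton_top v
  have hV : H.verts.ncard = Fintype.card V - 1 := G.ncard_verts_deleteVerts_singleton_top v
  have hdeg := G.degree_lt_card_verts v
  have hcard := hG.1
  have hproper : H.verts ≠ Set.univ ∨ H.edgeSet ≠ G.edgeSet :=
    .inl fun h ↦ (h ▸ Set.mem_univ v : v ∈ H.verts).2 rfl
  have hne : H.edgeSet.Nonempty := Set.nonempty_of_ncard_ne_zero (by omega)
  have := hG.2 H hproper hne
  omega

theorem exists_degree_eq_three (hG : IsCircuit22 G) : ∃ v, G.degree v = 3 := by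
  have hE : 2 * G.edgeFinset.card < 4 * Fintype.card V := by
    rw [← Set.ncard_coe_finset, coe_edgeFinset]
    have := hG.1
    omega
  obtain ⟨v, hv⟩ := G.exists_degree_lt_of_two_mul_card_edgeFinset_lt hE
  exact ⟨v, by have := hG.three_le_degree v; omega⟩

end IsCircuit22

theorem min_degree_of_circuit22_general {V : Type*} [Fintype V]
    (G : SimpleGraph V) [DecidableRel G.Adj] (hG : IsCircuit22 G) :
    (∀ v : V, 3 ≤ G.degree v) ∧ ∃ v : V, G.degree v = 3 :=
  ⟨hG.three_le_degree, hG.exists_degree_eq_three⟩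

/-- If `G` is a `(2,2)`-circuit then its minimum degree is exactly `3`:
every vertex has degree at least `3` and some vertex has degree exactly `3`. -/
theorem min_degree_of_circuit22 {V : Type*} [Fintype V] [DecidableEq V]
    (G : SimpleGraph V) [DecidableRel G.Adj] (hG : IsCircuit22 G) :
    (∀ v : V, 3 ≤ G.degree v) ∧ ∃ v : V, G.degree v = 3 :=
  min_degree_of_circuit22_general G hG
end

section
/- Let G = (V,E) be a (2,2)-circuit and let X, Y be proper subsets of V that are both critical (i.e. i(X) = 2|X| - 2 and i(Y) = 2|Y| - 2, where i(S) denotes the number of edges of G with both endpoints in S). If |X ∩ Y| ≥ 1 and |X ∪ Y| ≤ |V| - 1, then X ∩ Y and X ∪ Y are both critical, and there are no edges of G between X \ Y and Y \ X. -/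
/-- The set of edges of `G` with both endpoints in `S`. -/
def inducedEdges {V : Type*} (G : SimpleGraph V) (S : Set V) : Set (Sym2 V) :=
  {e ∈ G.edgeSet | ∀ v ∈ e, v ∈ S}

/-- A vertex set `S` is critical in `G` if `i(S) = 2|S| - 2`. -/
def Critical {V : Type*} (G : SimpleGraph V) (S : Set V) : Prop :=
  (inducedEdges G S).ncard + 2 = 2 * S.ncard

lemma inducedEdges_eq_subgraph_edgeSet {V : Type*} (G : SimpleGraph V) (S : Set V) :
    ((⊤ : G.Subgraph).induce S).edgeSet = inducedEdges G S := by
  ext e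
  induction e using Sym2.inductionOn with
  | hf a b =>
    simp only [SimpleGraph.Subgraph.mem_edgeSet, SimpleGraph.Subgraph.induce_adj,
      SimpleGraph.Subgraph.top_adj, inducedEdges, Set.mem_setOf_eq, SimpleGraph.mem_edgeSet,
      Sym2.mem_iff]
    constructor
    · rintro ⟨ha, hb, hadj⟩
      exact ⟨hadj, by rintro v (rfl | rfl) <;> assumption⟩
    · rintro ⟨hadj, hv⟩
      exact ⟨hv a (Or.inl rfl), hv b (Or.inr rfl), hadj⟩

lemma inducedEdges_bound {V : Type*} [Fintype V] (G : SimpleGraph V)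
    (hG : IsCircuit22 G) (S : Set V) (hS : S ≠ Set.univ) (h1 : 1 ≤ S.ncard) :
    (inducedEdges G S).ncard + 2 ≤ 2 * S.ncard := by
  rcases (inducedEdges G S).eq_empty_or_nonempty with he | he
  · rw [he]; simp; omega
  · have h := hG.2 ((⊤ : G.Subgraph).induce S) (Or.inl hS)
      (by rw [inducedEdges_eq_subgraph_edgeSet]; exact he)
    rwa [inducedEdges_eq_subgraph_edgeSet] at h

/-- In a `(2,2)`-circuit, if `X` and `Y` are proper critical subsets of the vertex set
with `|X ∩ Y| ≥ 1` and `|X ∪ Y| ≤ |V| - 1`, then `X ∩ Y` and `X ∪ Y` are critical and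
there are no edges between `X \ Y` and `Y \ X`. -/
theorem critical_inter_union {V : Type*} [Fintype V] (G : SimpleGraph V)
    (hG : IsCircuit22 G) (X Y : Set V)
    (hXp : X ≠ Set.univ) (hYp : Y ≠ Set.univ)
    (hXc : Critical G X) (hYc : Critical G Y)
    (hint : 1 ≤ (X ∩ Y).ncard)
    (hun : (X ∪ Y).ncard + 1 ≤ Fintype.card V) :
    Critical G (X ∩ Y) ∧ Critical G (X ∪ Y) ∧
      ∀ a ∈ X \ Y, ∀ b ∈ Y \ X, ¬ G.Adj a b := by
  have := Finite.of_fintype V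
  -- basic set facts
  have hIp : X ∩ Y ≠ Set.univ := fun h => hXp (Set.eq_univ_of_univ_subset (h ▸ Set.inter_subset_left))
  have hUp : X ∪ Y ≠ Set.univ := by
    intro h
    rw [h, Set.ncard_univ, Nat.card_eq_fintype_card] at hun
    omega
  have hU1 : 1 ≤ (X ∪ Y).ncard :=
    le_trans hint (Set.ncard_le_ncard (Set.inter_subset_left.trans Set.subset_union_left) (Set.toFinite _))
  -- edge sets
  rw [Critical] at hXc hYc
  set A := inducedEdges G X with hA
  set B := inducedEdges G Y with hB
  have hAB_inter : A ∩ B = inducedEdges G (X ∩ Y) := by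
    ext e
    simp only [hA, hB, inducedEdges, Set.mem_inter_iff, Set.mem_setOf_eq]
    constructor
    · rintro ⟨⟨h1, h2⟩, ⟨h3, h4⟩⟩
      exact ⟨h1, fun v hv => ⟨h2 v hv, h4 v hv⟩⟩
    · rintro ⟨h1, h2⟩
      exact ⟨⟨h1, fun v hv => (h2 v hv).1⟩, ⟨h1, fun v hv => (h2 v hv).2⟩⟩
  have hAB_union : A ∪ B ⊆ inducedEdges G (X ∪ Y) := by
    rintro e (he | he) <;>
    · obtain ⟨h1, h2⟩ := he
      exact ⟨h1, fun v hv => by first | exact Or.inl (h2 v hv) | exact Or.inr (h2 v hv)⟩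
  -- cardinalities
  have hsum : (A ∪ B).ncard + (A ∩ B).ncard = A.ncard + B.ncard :=
    Set.ncard_union_add_ncard_inter A B (Set.toFinite _) (Set.toFinite _)
  have hvsum : (X ∪ Y).ncard + (X ∩ Y).ncard = X.ncard + Y.ncard :=
    Set.ncard_union_add_ncard_inter X Y (Set.toFinite _) (Set.toFinite _)
  have hIb := inducedEdges_bound G hG (X ∩ Y) hIp hint
  have hUb := inducedEdges_bound G hG (X ∪ Y) hUp hU1
  have hUle : (A ∪ B).ncard ≤ (inducedEdges G (X ∪ Y)).ncard :=
    Set.ncard_le_ncard hAB_union (Set.toFinite _)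
  rw [hAB_inter] at hsum
  have hIc : Critical G (X ∩ Y) := by rw [Critical]; omega
  have hUc : Critical G (X ∪ Y) := by rw [Critical]; omega
  have hcard_eq : (A ∪ B).ncard = (inducedEdges G (X ∪ Y)).ncard := by
    rw [Critical] at hIc hUc; omega
  have hset_eq : A ∪ B = inducedEdges G (X ∪ Y) :=
    Set.eq_of_subset_of_ncard_le hAB_union (le_of_eq hcard_eq.symm) (Set.toFinite _)
  refine ⟨hIc, hUc, ?_⟩
  rintro a ⟨haX, haY⟩ b ⟨hbY, hbX⟩ hadj
  have he : s(a, b) ∈ inducedEdges G (X ∪ Y) := by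
    refine ⟨hadj, ?_⟩
    rintro v hv
    rw [Sym2.mem_iff] at hv
    rcases hv with rfl | rfl
    · exact Or.inl haX
    · exact Or.inr hbY
  rw [← hset_eq] at he
  rcases he with he | he
  · exact hbX (he.2 b (by simp))
  · exact haY (he.2 a (by simp))
end

section
/- If G = (V,E) is a (2,2)-circuit, then the subgraph of G induced by the set V₃ of vertices of degree 3 contains no cycles. -/
open Finset SimpleGraph

theorem Sym2.card_filter_mem_of_not_isDiag {V : Type*} [Fintype V] [DecidableEq V]
    (T : Finset V) {e : Sym2 V} (he : ¬ e.IsDiag) :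
    #{x ∈ T | x ∈ e} =
      (if ∃ x ∈ e, x ∈ T then 1 else 0) + (if ∀ x ∈ e, x ∈ T then 1 else 0) := by
  induction e with
  | _ a b =>
  have hab : a ≠ b := he
  by_cases ha : a ∈ T <;> by_cases hb : b ∈ T <;>
    simp [Sym2.mem_iff, filter_or, filter_eq', ha, hb, hab]

theorem SimpleGraph.Walk.IsCycle.card_support_toFinset {V : Type*} [DecidableEq V]
    {G : SimpleGraph V} {u : V} {c : G.Walk u u} (hc : c.IsCycle) :
    #c.support.toFinset = c.length := by
  have hu : u ∈ c.support.tail.toFinset :=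
    List.mem_toFinset.mpr (c.end_mem_tail_support hc.not_nil)
  rw [← c.cons_tail_support, List.toFinset_cons, insert_eq_of_mem hu,
    List.toFinset_card_of_nodup hc.support_nodup, List.length_tail, c.length_support]
  rfl

namespace SimpleGraph

variable {V : Type*} [Fintype V] [DecidableEq V] (G : SimpleGraph V) [DecidableRel G.Adj]

def edgesMeeting (T : Finset V) : Finset (Sym2 V) := {e ∈ G.edgeFinset | ∃ x ∈ e, x ∈ T}

def edgesWithin (T : Finset V) : Finset (Sym2 V) := {e ∈ G.edgeFinset | ∀ x ∈ e, x ∈ T}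

theorem card_edgesMeeting_add_card_edgesWithin (T : Finset V) :
    #(G.edgesMeeting T) + #(G.edgesWithin T) = ∑ x ∈ T, G.degree x := by
  calc #(G.edgesMeeting T) + #(G.edgesWithin T)
      = ∑ e ∈ G.edgeFinset, #{x ∈ T | x ∈ e} := by
        rw [edgesMeeting, edgesWithin, card_filter, card_filter, ← sum_add_distrib]
        refine sum_congr rfl fun e he => ?_
        exact (Sym2.card_filter_mem_of_not_isDiag T
          (G.not_isDiag_of_mem_edgeSet (mem_edgeFinset.mp he))).symm
    _ = ∑ x ∈ T, #{e ∈ G.edgeFinset | x ∈ e} :=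
        (sum_card_bipartiteAbove_eq_sum_card_bipartiteBelow (· ∈ ·)).symm
    _ = ∑ x ∈ T, G.degree x := by
        simp_rw [← incidenceFinset_eq_filter, card_incidenceFinset_eq_degree]

theorem card_edgesMeeting_add_card_edgesWithin_compl (T : Finset V) :
    #(G.edgesMeeting T) + #(G.edgesWithin Tᶜ) = #G.edgeFinset := by
  have : G.edgesWithin Tᶜ = {e ∈ G.edgeFinset | ¬ ∃ x ∈ e, x ∈ T} := by
    simp [edgesWithin]
  rw [this, edgesMeeting, card_filter_add_card_filter_not]

theorem edgeSet_top_induce (S : Finset V) :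
    ((⊤ : G.Subgraph).induce (S : Set V)).edgeSet = G.edgesWithin S := by
  ext e
  induction e with
  | _ a b => simp [edgesWithin, and_assoc, and_comm]

variable {G}

theorem Walk.IsCycle.length_le_card_edgesWithin {u : V} {c : G.Walk u u} (hc : c.IsCycle) :
    c.length ≤ #(G.edgesWithin c.support.toFinset) := by
  rw [← c.length_edges, ← List.toFinset_card_of_nodup hc.edges_nodup]
  refine card_le_card fun e he => ?_
  rw [List.mem_toFinset] at he
  exact mem_filter.mpr ⟨mem_edgeFinset.mpr (c.edges_subset_edgeSet he),
    fun x hx => List.mem_toFinset.mpr (c.mem_support_of_mem_edges he hx)⟩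

end SimpleGraph

namespace IsCircuit22

variable {V : Type*} [Fintype V] {G : SimpleGraph V} [DecidableRel G.Adj]

theorem card_edgeFinset_add_one (hG : IsCircuit22 G) :
    #G.edgeFinset + 1 = 2 * Fintype.card V := by
  rw [← hG.1, ← Set.ncard_coe_finset, coe_edgeFinset]

theorem not_isRegularOfDegree_three (hG : IsCircuit22 G) : ¬ G.IsRegularOfDegree 3 := by
  intro hreg
  have hsum := G.sum_degrees_eq_twice_card_edges
  simp only [hreg.degree_eq, sum_const, card_univ, smul_eq_mul] at hsum
  have hcard := hG.card_edgeFinset_add_one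
  obtain ⟨v⟩ : Nonempty V := Fintype.card_pos_iff.mp (by omega)
  have hlt := G.degree_lt_card_verts v
  rw [hreg.degree_eq] at hlt
  omega

variable [DecidableEq V]

theorem card_edgesWithin_add_two_le (hG : IsCircuit22 G) {S : Finset V}
    (hS_ne_univ : S ≠ univ) (hS : S.Nonempty) : #(G.edgesWithin S) + 2 ≤ 2 * #S := by
  rcases (G.edgesWithin S).eq_empty_or_nonempty with hE | hE
  · rw [hE, card_empty]
    have hS_pos := hS.card_pos
    omega
  · have hsparse := hG.2 ((⊤ : G.Subgraph).induce S) (Or.inl (by simpa using hS_ne_univ))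
      (by rw [edgeSet_top_induce]; exact hE)
    simpa [edgeSet_top_induce] using hsparse

theorem not_isCycle_of_forall_degree_eq_three (hG : IsCircuit22 G) {u : V} {c : G.Walk u u}
    (hdeg : ∀ x ∈ c.support, G.degree x = 3) : ¬ c.IsCycle := by
  intro hc
  have hdeg' : ∀ x ∈ c.support.toFinset, G.degree x = 3 := fun x hx =>
    hdeg x (List.mem_toFinset.mp hx)
  have hne : c.support.toFinset.Nonempty := ⟨u, List.mem_toFinset.mpr c.start_mem_support⟩
  have hne_compl : c.support.toFinsetᶜ.Nonempty := by
    obtain ⟨w, hw⟩ := not_forall.mp hG.not_isRegularOfDegree_three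
    exact ⟨w, mem_compl.mpr fun hwc => hw (hdeg' w hwc)⟩
  have hdeg_sum := G.card_edgesMeeting_add_card_edgesWithin c.support.toFinset
  rw [sum_congr rfl hdeg', sum_const, smul_eq_mul] at hdeg_sum
  have hwithin := hc.length_le_card_edgesWithin
  have hlength := hc.card_support_toFinset
  have hsplit := G.card_edgesMeeting_add_card_edgesWithin_compl c.support.toFinset
  have hedges := hG.card_edgeFinset_add_one
  have hsparse :=
    hG.card_edgesWithin_add_two_le ((compl_ne_univ_iff_nonempty _).mpr hne) hne_compl
  have hcompl := card_compl c.support.toFinset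
  omega

end IsCircuit22

/-- In a `(2,2)`-circuit, the subgraph induced by the set `V₃` of vertices of
degree exactly `3` contains no cycles. -/
theorem induced_nodes_acyclic {V : Type*} [Fintype V] [DecidableEq V]
    (G : SimpleGraph V) [DecidableRel G.Adj] (hG : IsCircuit22 G) :
    (G.induce {v : V | G.degree v = 3}).IsAcyclic := by
  intro v c hc
  let ι := Embedding.induce (G := G) {v : V | G.degree v = 3}
  refine hG.not_isCycle_of_forall_degree_eq_three (fun x hx => ?_)
    (hc.map (f := ι.toHom) ι.injective)
  rw [Walk.support_map, List.mem_map] at hx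
  obtain ⟨y, -, rfl⟩ := hx
  exact y.2
end

section
/- If a graph G' is obtained from a (2,2)-circuit G by a 1-extension (deleting an edge xy and adding a new vertex v adjacent to x, y, and some third vertex z), then G' is also a (2,2)-circuit. -/
/-!
Since `G'` has one more vertex and two more edges than `G`, the count `|E| = 2|V| - 1` carries
over. For sparsity, let `H'` be a proper subgraph of `G'` and `H` its trace on the old vertices:
`H` misses `xy`, so it is a proper subgraph of `G`, while the new vertex contributes one vertex
and `d ≤ 3` edges to `H'`. If `d ≤ 2`, the bound for `H` gives the bound for `H'`. If `d = 3`,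
then `x, y ∈ H` and `H + xy` is still a subgraph of `G`; it is proper unless `H' = G'`, and its
bound has one more unit of slack, which pays for the third new edge.
-/

namespace Set

variable {α : Type*} [Finite α]

theorem ncard_preimage_some_le (T : Set (Option α)) : (some ⁻¹' T).ncard ≤ T.ncard := by
  rw [← ncard_image_of_injective _ (Option.some_injective α)]
  exact ncard_le_ncard (image_preimage_subset _ _)

theorem ncard_preimage_some_add_one {T : Set (Option α)} (h : none ∈ T) :
    (some ⁻¹' T).ncard + 1 = T.ncard := by
  have hT : T = insert none (some '' (some ⁻¹' T)) := by
    ext (_ | a) <;> simp [h]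
  conv_rhs => rw [hT]
  rw [ncard_insert_of_notMem (by simp), ncard_image_of_injective _ (Option.some_injective α)]

end Set

theorem Sym2.ncard_eq_ncard_preimage_map_some_add {V : Type*} [Finite V]
    (S : Set (Sym2 (Option V))) :
    S.ncard = (Sym2.map some ⁻¹' S).ncard + {a | s(none, a) ∈ S}.ncard := by
  have hsplit : S = Sym2.map some '' (Sym2.map some ⁻¹' S) ∪
      Sym2.mkEmbedding none '' {a | s(none, a) ∈ S} := by
    refine Set.Subset.antisymm (fun e he => ?_) ?_
    · induction e using Sym2.ind with
      | _ u v =>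
        rcases u with _ | a
        · exact Or.inr ⟨v, he, rfl⟩
        rcases v with _ | b
        · have he' : s(none, some a) ∈ S := Sym2.eq_swap ▸ he
          exact Or.inr ⟨some a, he', Sym2.eq_swap⟩
        · exact Or.inl ⟨s(a, b), he, rfl⟩
    · rintro _ (⟨e, he, rfl⟩ | ⟨a, ha, rfl⟩) <;> assumption
  have hdisj : Disjoint (Sym2.map some '' (Sym2.map some ⁻¹' S))
      (Sym2.mkEmbedding none '' {a | s(none, a) ∈ S}) := by
    rw [Set.disjoint_left]
    rintro _ ⟨e, -, rfl⟩ ⟨a, -, h⟩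
    have : none ∈ Sym2.map some e := h ▸ Sym2.mem_mk_left _ _
    simp at this
  conv_lhs => rw [hsplit]
  rw [Set.ncard_union_eq hdisj,
    Set.ncard_image_of_injective _ (Sym2.map.injective (Option.some_injective V)),
    Set.ncard_image_of_injective _ (Sym2.mkEmbedding none).injective]

namespace SimpleGraph

variable {V : Type*}

theorem Subgraph.verts_ne_univ_or_edgeSet_ne_iff [Finite V] {G : SimpleGraph V}
    (H : G.Subgraph) : (H.verts ≠ Set.univ ∨ H.edgeSet ≠ G.edgeSet) ↔
      H.verts.ncard < Nat.card V ∨ H.edgeSet.ncard < G.edgeSet.ncard := by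
  refine or_congr ⟨Set.ncard_lt_card, ?_⟩ ⟨fun h => ?_, ?_⟩
  · intro h hH
    simp [hH] at h
  · exact Set.ncard_lt_ncard (H.edgeSet_subset.ssubset_of_ne h)
  · intro h hH
    simp [hH] at h

/-- `Subgraph.comap` along `some`, which need not be a homomorphism from `G` to `G'`. -/
def Subgraph.comapSome {G : SimpleGraph V} {G' : SimpleGraph (Option V)}
    (hle : ∀ ⦃a b⦄, G'.Adj (some a) (some b) → G.Adj a b) (H' : G'.Subgraph) :
    G.Subgraph where
  verts := some ⁻¹' H'.verts
  Adj a b := H'.Adj (some a) (some b)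
  adj_sub h := hle (H'.adj_sub h)
  edge_vert h := H'.edge_vert h
  symm := ⟨fun _ _ h => h.symm⟩

section comapSome

variable {G : SimpleGraph V} {G' : SimpleGraph (Option V)}
  (hle : ∀ ⦃a b⦄, G'.Adj (some a) (some b) → G.Adj a b) (H' : G'.Subgraph)

theorem Subgraph.edgeSet_comapSome :
    (H'.comapSome hle).edgeSet = Sym2.map some ⁻¹' H'.edgeSet := by
  ext e
  induction e using Sym2.ind with
  | _ a b => exact Iff.rfl

theorem Subgraph.ncard_edgeSet_eq_comapSome_add [Finite V] :
    H'.edgeSet.ncard = (H'.comapSome hle).edgeSet.ncard + (H'.neighborSet none).ncard := by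
  rw [H'.edgeSet_comapSome hle]
  exact Sym2.ncard_eq_ncard_preimage_map_some_add _

theorem Subgraph.comapSome_verts_nonempty (hE : H'.edgeSet.Nonempty) :
    (H'.comapSome hle).verts.Nonempty := by
  obtain ⟨e, he⟩ := hE
  induction e using Sym2.ind with
  | _ u v =>
    rcases u with _ | a
    · rcases v with _ | b
      · exact absurd (H'.adj_sub he) G'.irrefl
      · exact ⟨b, (H'.mem_edgeSet.1 he).snd_mem⟩
    · exact ⟨a, (H'.mem_edgeSet.1 he).fst_mem⟩

end comapSome

theorem ncard_edgeSet_option [Finite V] (G' : SimpleGraph (Option V)) :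
    G'.edgeSet.ncard = (Sym2.map some ⁻¹' G'.edgeSet).ncard + (G'.neighborSet none).ncard :=
  Sym2.ncard_eq_ncard_preimage_map_some_add _

end SimpleGraph

namespace SimpleGraph

variable {V : Type*}

/-- `G'` arises from `G` by the 1-extension that deletes the edge `xy` and joins the new vertex
`none` to `x`, `y` and `z`. -/
structure IsOneExtension (G : SimpleGraph V) (G' : SimpleGraph (Option V)) (x y z : V) :
    Prop where
  adj : G.Adj x y
  ne_left : z ≠ x
  ne_right : z ≠ y
  adj_some_some : ∀ a b, G'.Adj (some a) (some b) ↔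
    G.Adj a b ∧ ¬(a = x ∧ b = y) ∧ ¬(a = y ∧ b = x)
  adj_some_none : ∀ a, G'.Adj (some a) none ↔ a = x ∨ a = y ∨ a = z

namespace IsOneExtension

variable {G : SimpleGraph V} {G' : SimpleGraph (Option V)} {x y z : V}

theorem adj_of_adj_some (h : G.IsOneExtension G' x y z) ⦃a b : V⦄
    (hab : G'.Adj (some a) (some b)) : G.Adj a b :=
  ((h.adj_some_some a b).1 hab).1

theorem not_comapSome_adj (h : G.IsOneExtension G' x y z) (H' : G'.Subgraph) :
    ¬(H'.comapSome h.adj_of_adj_some).Adj x y :=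
  fun hxy => ((h.adj_some_some x y).1 (H'.adj_sub hxy)).2.1 ⟨rfl, rfl⟩

theorem preimage_edgeSet (h : G.IsOneExtension G' x y z) :
    Sym2.map some ⁻¹' G'.edgeSet = G.edgeSet \ {s(x, y)} := by
  ext e
  induction e using Sym2.ind with
  | _ a b =>
    simp only [Set.mem_preimage, Sym2.map_mk, mem_edgeSet, h.adj_some_some, Set.mem_sdiff,
      Set.mem_singleton_iff, Sym2.eq_iff]
    tauto

theorem neighborSet_none (h : G.IsOneExtension G' x y z) :
    G'.neighborSet none = {some x, some y, some z} := by
  ext (_ | a) <;> simp [G'.adj_comm none, h.adj_some_none]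

theorem ncard_neighborSet_none (h : G.IsOneExtension G' x y z) :
    (G'.neighborSet none).ncard = 3 := by
  rw [h.neighborSet_none]
  exact Set.ncard_eq_three.2 ⟨_, _, _, by simpa using h.adj.ne, by simpa using h.ne_left.symm,
    by simpa using h.ne_right.symm, rfl⟩

theorem ncard_edgeSet [Finite V] (h : G.IsOneExtension G' x y z) :
    G'.edgeSet.ncard = G.edgeSet.ncard + 2 := by
  have := Set.ncard_sdiff_singleton_add_one (G.mem_edgeSet.2 h.adj)
  rw [ncard_edgeSet_option, h.preimage_edgeSet, h.ncard_neighborSet_none]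
  omega

end IsOneExtension

end SimpleGraph

namespace IsCircuit22

open SimpleGraph

variable {V : Type*} [Fintype V] {G : SimpleGraph V}

theorem ncard_edgeSet_add_two_le (hG : IsCircuit22 G) (H : G.Subgraph)
    (hH : H.verts.ncard < Nat.card V ∨ H.edgeSet.ncard < G.edgeSet.ncard)
    (hne : H.verts.Nonempty) : H.edgeSet.ncard + 2 ≤ 2 * H.verts.ncard := by
  rcases H.edgeSet.eq_empty_or_nonempty with hE | hE
  · have := (Set.ncard_pos).2 hne
    rw [hE, Set.ncard_empty]
    omega
  · exact hG.2 H (H.verts_ne_univ_or_edgeSet_ne_iff.2 hH) hE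

theorem ncard_edgeSet_add_three_le (hG : IsCircuit22 G) (H : G.Subgraph) {x y : V}
    (hxy : G.Adj x y) (hx : x ∈ H.verts) (hy : y ∈ H.verts) (hHxy : ¬H.Adj x y)
    (hH : H.verts.ncard < Nat.card V ∨ H.edgeSet.ncard + 1 < G.edgeSet.ncard) :
    H.edgeSet.ncard + 3 ≤ 2 * H.verts.ncard := by
  set K := H ⊔ G.subgraphOfAdj hxy
  have hKv : K.verts = H.verts := by simp [K, hx, hy]
  have hKe : K.edgeSet.ncard = H.edgeSet.ncard + 1 := by
    rw [Subgraph.edgeSet_sup, edgeSet_subgraphOfAdj, Set.union_singleton,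
      Set.ncard_insert_of_notMem (H.mem_edgeSet.not.2 hHxy)]
  have := hG.ncard_edgeSet_add_two_le K (by rwa [hKv, hKe]) (hKv ▸ ⟨x, hx⟩)
  rw [hKv, hKe] at this
  omega

variable {G' : SimpleGraph (Option V)} {x y z : V}

theorem ncard_edgeSet_add_two_le_of_isOneExtension (hG : IsCircuit22 G)
    (h : G.IsOneExtension G' x y z) (H' : G'.Subgraph)
    (hH' : H'.verts.ncard < Nat.card (Option V) ∨ H'.edgeSet.ncard < G'.edgeSet.ncard)
    (hne : H'.edgeSet.Nonempty) : H'.edgeSet.ncard + 2 ≤ 2 * H'.verts.ncard := by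
  have hE := H'.ncard_edgeSet_eq_comapSome_add h.adj_of_adj_some
  set H := H'.comapSome h.adj_of_adj_some
  have hHG : H.edgeSet.ncard < G.edgeSet.ncard := Set.ncard_lt_ncard
    ⟨H.edgeSet_subset, fun hsub => h.not_comapSome_adj H' (hsub (G.mem_edgeSet.2 h.adj))⟩
  have hH := hG.ncard_edgeSet_add_two_le H (.inr hHG) (H'.comapSome_verts_nonempty _ hne)
  have hd : (H'.neighborSet none).ncard ≤ 3 :=
    h.ncard_neighborSet_none ▸ Set.ncard_le_ncard (H'.neighborSet_subset none)
  rcases (H'.neighborSet none).eq_empty_or_nonempty with hd0 | ⟨w, hw⟩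
  · have hV : H.verts.ncard ≤ H'.verts.ncard := Set.ncard_preimage_some_le _
    rw [hd0, Set.ncard_empty] at hE
    omega
  have hV : H.verts.ncard + 1 = H'.verts.ncard := Set.ncard_preimage_some_add_one hw.fst_mem
  rcases hd.lt_or_eq with hd2 | hd3
  · omega
  have hN : H'.neighborSet none = G'.neighborSet none := Set.eq_of_subset_of_ncard_le
    (H'.neighborSet_subset none) (by rw [hd3, h.ncard_neighborSet_none])
  have hmem : ∀ a, some a ∈ G'.neighborSet none → a ∈ H.verts := fun a ha =>
    H'.neighborSet_subset_verts none (hN ▸ ha)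
  have hx := hmem x (by simp [h.neighborSet_none])
  have hy := hmem y (by simp [h.neighborSet_none])
  have := hG.ncard_edgeSet_add_three_le H h.adj hx hy (h.not_comapSome_adj H') (by
    rw [Finite.card_option] at hH'
    have := h.ncard_edgeSet
    omega)
  omega

theorem isOneExtension (hG : IsCircuit22 G) (h : G.IsOneExtension G' x y z) :
    IsCircuit22 G' := by
  refine ⟨?_, fun H' hH' hne => hG.ncard_edgeSet_add_two_le_of_isOneExtension h H'
    (H'.verts_ne_univ_or_edgeSet_ne_iff.1 hH') hne⟩
  rw [h.ncard_edgeSet, Fintype.card_option]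
  have := hG.1
  omega

end IsCircuit22

theorem oneExtension_circuit22_general {V : Type*} [Fintype V]
    (G : SimpleGraph V) (hG : IsCircuit22 G)
    (x y z : V) (hxy : G.Adj x y) (hzx : z ≠ x) (hzy : z ≠ y)
    (G' : SimpleGraph (Option V))
    (hold : ∀ a b : V, G'.Adj (some a) (some b) ↔
      (G.Adj a b ∧ ¬(a = x ∧ b = y) ∧ ¬(a = y ∧ b = x)))
    (hnew : ∀ a : V, G'.Adj (some a) none ↔ (a = x ∨ a = y ∨ a = z)) :
    IsCircuit22 G' :=
  hG.isOneExtension ⟨hxy, hzx, hzy, hold, hnew⟩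

/-- If `G'` is obtained from a `(2,2)`-circuit `G` by a `1`-extension (delete the
edge `xy`, add a new vertex — here `none : Option V` — adjacent to `x`, `y` and a
third vertex `z`), then `G'` is also a `(2,2)`-circuit. -/
theorem oneExtension_circuit22 {V : Type*} [Fintype V] [DecidableEq V]
    (G : SimpleGraph V) (hG : IsCircuit22 G)
    (x y z : V) (hxy : G.Adj x y) (hzx : z ≠ x) (hzy : z ≠ y)
    (G' : SimpleGraph (Option V))
    (hold : ∀ a b : V, G'.Adj (some a) (some b) ↔
      (G.Adj a b ∧ ¬(a = x ∧ b = y) ∧ ¬(a = y ∧ b = x)))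
    (hnew : ∀ a : V, G'.Adj (some a) none ↔ (a = x ∨ a = y ∨ a = z)) :
    IsCircuit22 G' :=
  oneExtension_circuit22_general G hG x y z hxy hzx hzy G' hold hnew
end

section
/- Let H = (U,F) and H' = (U',F') be graphs, let X be a normed space, and let (G,p) be a framework in X with G = H ∪ H'. Suppose the subframeworks (H, p|_U) and (H', p|_{U'}) are both globally rigid in X, and the restricted placement p|_{U∩U'} is isometrically full (the only isometry of X fixing p_v for all v ∈ U ∩ U' is the identity). Then (G,p) is globally rigid in X. -/
/-- **Gluing globally rigid frameworks.**
Let `H`, `H'` be graphs on a common vertex type with vertex supports `U`, `U'`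
covering `V`, and let `p` be a placement in a normed space `X`.  If the
subframeworks `(H, p|_U)` and `(H', p|_{U'})` are globally rigid in `X`, and the
restriction of `p` to `U ∩ U'` is isometrically full (the only isometry of `X`
fixing `p_v` for all `v ∈ U ∩ U'` is the identity), then the framework on
`G = H ∪ H'` is globally rigid in `X`. -/
theorem glue_globally_rigid
    {X : Type*} [NormedAddCommGroup X] [NormedSpace ℝ X]
    {V : Type*} (H H' : SimpleGraph V) (U U' : Set V)
    (hHU : ∀ ⦃a b : V⦄, H.Adj a b → a ∈ U ∧ b ∈ U)
    (hH'U' : ∀ ⦃a b : V⦄, H'.Adj a b → a ∈ U' ∧ b ∈ U')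
    (hcover : U ∪ U' = Set.univ)
    (p : V → X)
    (hH : ∀ q : V → X, (∀ ⦃a b : V⦄, H.Adj a b → ‖q a - q b‖ = ‖p a - p b‖) →
      ∃ g : X ≃ᵢ X, ∀ v ∈ U, q v = g (p v))
    (hH' : ∀ q : V → X, (∀ ⦃a b : V⦄, H'.Adj a b → ‖q a - q b‖ = ‖p a - p b‖) →
      ∃ g : X ≃ᵢ X, ∀ v ∈ U', q v = g (p v))
    (hfull : ∀ g : X ≃ᵢ X, (∀ v ∈ U ∩ U', g (p v) = p v) → ∀ x : X, g x = x) :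
    ∀ q : V → X,
      (∀ ⦃a b : V⦄, (H ⊔ H').Adj a b → ‖q a - q b‖ = ‖p a - p b‖) →
      ∃ g : X ≃ᵢ X, ∀ v : V, q v = g (p v) := by
  intro q hq
  obtain ⟨g, hg⟩ := hH q (fun a b hab => hq (Or.inl hab))
  obtain ⟨g', hg'⟩ := hH' q (fun a b hab => hq (Or.inr hab))
  have key : ∀ x, (g.trans g'.symm) x = x := by
    apply hfull
    intro v hv
    simp only [IsometryEquiv.trans_apply]
    rw [← hg v hv.1, hg' v hv.2, IsometryEquiv.symm_apply_apply]
  refine ⟨g, fun v => ?_⟩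
  rcases (hcover ▸ Set.mem_univ v : v ∈ U ∪ U') with h | h
  · exact hg v h
  · have := key (p v)
    simp only [IsometryEquiv.trans_apply] at this
    rw [hg' v h]; nth_rewrite 1 [← this]; rw [IsometryEquiv.apply_symm_apply]
end

section
/- Let G be a graph with no isolated vertices that is M(2,2)-connected (every pair of edges lies in a common (2,2)-circuit). If G' is obtained from G by adding a new edge between two non-adjacent vertices, then G' is M(2,2)-connected. -/
/-- The vertices incident to an edge set `C`. -/
def edgeVerts {V : Type*} (C : Set (Sym2 V)) : Set V :=
  {v : V | ∃ e ∈ C, v ∈ e}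

/-- An edge set `C ⊆ E(G)` is (the edge set of) a `(2,2)`-circuit subgraph of `G`:
`|C| = 2|V(C)| - 1` and every proper nonempty subset `D` of `C` satisfies
`|D| ≤ 2|V(D)| - 2`. -/
def IsCircuitEdges {V : Type*} (G : SimpleGraph V) (C : Set (Sym2 V)) : Prop :=
  C ⊆ G.edgeSet ∧ C.ncard + 1 = 2 * (edgeVerts C).ncard ∧
  ∀ D : Set (Sym2 V), D ⊆ C → D ≠ C → D ≠ ∅ →
    D.ncard + 2 ≤ 2 * (edgeVerts D).ncard

/-- `G` is `M(2,2)`-connected: no isolated vertices, at least two edges, and every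
pair of edges lies in a common `(2,2)`-circuit of `G`. -/
def M22Connected {V : Type*} (G : SimpleGraph V) : Prop :=
  (∀ v : V, ∃ w : V, G.Adj v w) ∧ 2 ≤ G.edgeSet.ncard ∧
  ∀ e ∈ G.edgeSet, ∀ f ∈ G.edgeSet,
    ∃ C : Set (Sym2 V), IsCircuitEdges G C ∧ e ∈ C ∧ f ∈ C

/-!
An `M(2,2)`-connected graph has a circuit `C` through an edge at `a` and an edge at `b`.
Trading any edge of `C` for the new edge `ab` keeps `|C|` edges on at most `|V(C)|` vertices,
so the result is dependent and contains a circuit through `ab` and an old edge. The circuits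
of `(2,2)`-sparsity satisfy strong circuit elimination (the vertex count is submodular), so
"lying in a common circuit" propagates along circuits that share an edge; this links `ab`,
and hence any two edges of the new graph, through circuits.
-/

open Set

namespace Sparsity

variable {V : Type*}

def IsSparse (D : Set (Sym2 V)) : Prop :=
  ∀ D' ⊆ D, D'.Nonempty → D'.ncard + 2 ≤ 2 * (edgeVerts D').ncard

def IsCircuit (C : Set (Sym2 V)) : Prop :=
  Minimal (fun D => ¬ IsSparse D) C

lemma edgeVerts_mono {A B : Set (Sym2 V)} (h : A ⊆ B) : edgeVerts A ⊆ edgeVerts B :=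
  fun _ ⟨e, he, hv⟩ => ⟨e, h he, hv⟩

lemma edgeVerts_union (A B : Set (Sym2 V)) :
    edgeVerts (A ∪ B) = edgeVerts A ∪ edgeVerts B := by
  ext; simp [edgeVerts, or_and_right, exists_or]

lemma edgeVerts_singleton (u v : V) : edgeVerts {s(u, v)} = {u, v} := by
  ext; simp [edgeVerts]

lemma edgeVerts_nonempty {A : Set (Sym2 V)} (h : A.Nonempty) : (edgeVerts A).Nonempty := by
  obtain ⟨e, he⟩ := h
  induction e with
  | _ u v => exact ⟨u, s(u, v), he, Sym2.mem_mk_left u v⟩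

lemma IsSparse.anti {D E : Set (Sym2 V)} (hD : IsSparse D) (hED : E ⊆ D) : IsSparse E :=
  fun D' hD' => hD D' (hD'.trans hED)

lemma isSparse_empty : IsSparse (∅ : Set (Sym2 V)) :=
  fun _ hD hne => absurd (subset_empty_iff.1 hD) hne.ne_empty

lemma isSparse_singleton {u v : V} (huv : u ≠ v) : IsSparse {s(u, v)} := by
  intro D hD hne
  obtain rfl := (subset_singleton_iff_eq.1 hD).resolve_left hne.ne_empty
  simp [edgeVerts_singleton, ncard_pair huv]

lemma not_isSparse_of_lt {D : Set (Sym2 V)} (hD : D.Nonempty)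
    (h : 2 * (edgeVerts D).ncard < D.ncard + 2) : ¬ IsSparse D :=
  fun hs => (hs D subset_rfl hD).not_gt h

namespace IsCircuit

variable {C D : Set (Sym2 V)}

lemma not_isSparse (hC : IsCircuit C) : ¬ IsSparse C := hC.prop

lemma nonempty (hC : IsCircuit C) : C.Nonempty :=
  nonempty_iff_ne_empty.2 fun h => hC.not_isSparse (h ▸ isSparse_empty)

lemma isSparse_of_ssubset (hC : IsCircuit C) (h : D ⊂ C) : IsSparse D :=
  not_not.1 (hC.not_prop_of_ssubset h)

lemma eq_of_subset (hC : IsCircuit C) (hD : IsCircuit D) (h : D ⊆ C) : D = C :=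
  Minimal.eq_of_subset hC hD.prop h

lemma not_subset_of_mem_of_notMem (hC : IsCircuit C) (hD : IsCircuit D) {g : Sym2 V}
    (hgC : g ∈ C) (hgD : g ∉ D) : ¬ D ⊆ C :=
  fun hsub => hgD (hC.eq_of_subset hD hsub ▸ hgC)

lemma ncard_add_one [Finite V] (hC : IsCircuit C) :
    C.ncard + 1 = 2 * (edgeVerts C).ncard := by
  have hle : 2 * (edgeVerts C).ncard ≤ C.ncard + 1 := by
    by_contra! hlt
    refine hC.not_isSparse fun D hDC hD => ?_
    rcases hDC.eq_or_ssubset with rfl | hDC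
    · omega
    · exact hC.isSparse_of_ssubset hDC D subset_rfl hD
  obtain ⟨e, he⟩ := hC.nonempty
  have hge : C.ncard + 1 ≤ 2 * (edgeVerts C).ncard := by
    rcases (C \ {e}).eq_empty_or_nonempty with hCe | hCe
    · have hone : C.ncard = 1 := by
        rw [ncard_eq_one]; exact ⟨e, subset_antisymm (sdiff_eq_empty.1 hCe) (by simpa)⟩
      have := (ncard_pos (toFinite _)).2 (edgeVerts_nonempty hC.nonempty)
      omega
    · have hsp := hC.isSparse_of_ssubset (sdiff_singleton_ssubset.2 he) _ subset_rfl hCe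
      have := ncard_sdiff_singleton_of_mem he
      have := ncard_le_ncard (edgeVerts_mono (sdiff_subset : C \ {e} ⊆ C))
      have := (ncard_pos (toFinite _)).2 hC.nonempty
      omega
  omega

end IsCircuit

lemma isCircuitEdges_iff [Finite V] {G : SimpleGraph V} {C : Set (Sym2 V)} :
    IsCircuitEdges G C ↔ C ⊆ G.edgeSet ∧ IsCircuit C := by
  refine ⟨fun ⟨hsub, hcard, hprop⟩ => ⟨hsub, ?_⟩,
    fun ⟨hsub, hC⟩ => ⟨hsub, hC.ncard_add_one, fun D hD hne hD' =>
      hC.isSparse_of_ssubset (hD.ssubset_of_ne hne) D subset_rfl (nonempty_iff_ne_empty.2 hD')⟩⟩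
  have hC : C.Nonempty := nonempty_iff_ne_empty.2 fun h => by simp [h, edgeVerts] at hcard
  refine Set.minimal_iff_forall_ssubset.2 ⟨not_isSparse_of_lt hC (by omega), fun D hDC => ?_⟩
  exact not_not.2 fun D' hD' hne =>
    hprop D' (hD'.trans hDC.subset) (hD'.trans_ssubset hDC).ne hne.ne_empty

variable [Finite V]

lemma exists_isCircuit_subset {X : Set (Sym2 V)} (h : ¬ IsSparse X) : ∃ C ⊆ X, IsCircuit C :=
  exists_minimal_le_of_wellFoundedLT (fun D => ¬ IsSparse D) X h

lemma ncard_edgeVerts_union_add_inter_le (A B : Set (Sym2 V)) :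
    (edgeVerts (A ∪ B)).ncard + (edgeVerts (A ∩ B)).ncard ≤
      (edgeVerts A).ncard + (edgeVerts B).ncard := by
  rw [edgeVerts_union, ← ncard_union_add_ncard_inter (edgeVerts A)]
  have h : edgeVerts (A ∩ B) ⊆ edgeVerts A ∩ edgeVerts B :=
    subset_inter (edgeVerts_mono inter_subset_left) (edgeVerts_mono inter_subset_right)
  exact Nat.add_le_add_left (ncard_le_ncard h) _

namespace IsCircuit

variable {C C₁ C₂ : Set (Sym2 V)} {e f g : Sym2 V}

lemma not_isSparse_union_sdiff (hC₁ : IsCircuit C₁) (hC₂ : IsCircuit C₂) (hne : C₁ ≠ C₂)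
    (hg₁ : g ∈ C₁) (hg₂ : g ∈ C₂) : ¬ IsSparse ((C₁ ∪ C₂) \ {g}) := by
  have hinter : C₁ ∩ C₂ ⊂ C₁ := inter_subset_left.ssubset_of_ne fun h =>
    hne (hC₂.eq_of_subset hC₁ (inter_eq_left.1 h))
  obtain ⟨x, hx₁, hx₂⟩ := exists_of_ssubset hinter
  have hxg : x ≠ g := by rintro rfl; exact hx₂ ⟨hx₁, hg₂⟩
  refine not_isSparse_of_lt ⟨x, Or.inl hx₁, hxg⟩ ?_
  have := hC₁.isSparse_of_ssubset hinter _ subset_rfl ⟨g, hg₁, hg₂⟩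
  have := ncard_union_add_ncard_inter C₁ C₂
  have := ncard_edgeVerts_union_add_inter_le C₁ C₂
  have := hC₁.ncard_add_one
  have := hC₂.ncard_add_one
  have := ncard_sdiff_singleton_of_mem (s := C₁ ∪ C₂) (Or.inl hg₁)
  have := ncard_le_ncard (edgeVerts_mono (sdiff_subset : (C₁ ∪ C₂) \ {g} ⊆ C₁ ∪ C₂))
  have := (ncard_pos (toFinite (C₁ ∪ C₂))).2 ⟨g, Or.inl hg₁⟩
  omega

theorem strong_elimination (hC₁ : IsCircuit C₁) (hC₂ : IsCircuit C₂) (hg₁ : g ∈ C₁)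
    (hg₂ : g ∈ C₂) (hf₁ : f ∈ C₁) (hf₂ : f ∉ C₂) :
    ∃ C ⊆ (C₁ ∪ C₂) \ {g}, IsCircuit C ∧ f ∈ C := by
  induction hn : (C₁ ∪ C₂).ncard using Nat.strong_induction_on
    generalizing C₁ C₂ g f with
  | _ n ih =>
  obtain ⟨C₃, hC₃, hC₃'⟩ := exists_isCircuit_subset
    (hC₁.not_isSparse_union_sdiff hC₂ (fun h => hf₂ (h ▸ hf₁)) hg₁ hg₂)
  by_cases hfC₃ : f ∈ C₃
  · exact ⟨C₃, hC₃, hC₃', hfC₃⟩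
  have hgC₃ : g ∉ C₃ := fun h => (hC₃ h).2 rfl
  -- `C₃` is not inside `C₁`, so it uses an edge `h ∈ C₂ \ C₁`; eliminate `h` from `C₂, C₃`
  -- keeping `g`, then `g` from `C₁` and the result keeping `f`.
  obtain ⟨h, hhC₃, hh₁⟩ := not_subset.1 (hC₁.not_subset_of_mem_of_notMem hC₃' hg₁ hgC₃)
  have hh₂ : h ∈ C₂ := (hC₃ hhC₃).1.resolve_left hh₁
  have hC₃₁₂ : C₃ ⊆ C₁ ∪ C₂ := hC₃.trans sdiff_subset
  obtain ⟨C₄, hC₄, hC₄', hgC₄⟩ := ih _ (hn ▸ ncard_lt_ncard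
    ⟨union_subset subset_union_right hC₃₁₂, fun hs => (hs (Or.inl hf₁)).elim hf₂ hfC₃⟩)
    hC₂ hC₃' hh₂ hhC₃ hg₂ hgC₃ rfl
  have hC₄₁₂ : C₄ ⊆ C₁ ∪ C₂ :=
    hC₄.trans (sdiff_subset.trans (union_subset subset_union_right hC₃₁₂))
  have hfC₄ : f ∉ C₄ := fun hf => (hC₄ hf).1.elim hf₂ hfC₃
  obtain ⟨F, hF, hF', hfF⟩ := ih _ (hn ▸ ncard_lt_ncard
    ⟨union_subset subset_union_left hC₄₁₂, fun hs => (hs (Or.inr hh₂)).elim hh₁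
      fun hhC₄ => (hC₄ hhC₄).2 rfl⟩)
    hC₁ hC₄' hg₁ hgC₄ hf₁ hfC₄ rfl
  exact ⟨F, hF.trans (sdiff_subset_sdiff (union_subset subset_union_left hC₄₁₂) subset_rfl),
    hF', hfF⟩

theorem exists_common_isCircuit (hC₁ : IsCircuit C₁) (hC₂ : IsCircuit C₂) (hg₁ : g ∈ C₁)
    (hg₂ : g ∈ C₂) (he : e ∈ C₁) (hf : f ∈ C₂) :
    ∃ C ⊆ C₁ ∪ C₂, IsCircuit C ∧ e ∈ C ∧ f ∈ C := by
  induction hn : (C₁ ∪ C₂).ncard using Nat.strong_induction_on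
    generalizing C₁ C₂ g with
  | _ n ih =>
  by_cases hf₁ : f ∈ C₁
  · exact ⟨C₁, subset_union_left, hC₁, he, hf₁⟩
  by_cases he₂ : e ∈ C₂
  · exact ⟨C₂, subset_union_right, hC₂, he₂, hf⟩
  obtain ⟨C₃, hC₃, hC₃', hfC₃⟩ := hC₂.strong_elimination hC₁ hg₂ hg₁ hf hf₁
  obtain ⟨C₄, hC₄, hC₄', heC₄⟩ := hC₁.strong_elimination hC₂ hg₁ hg₂ he he₂
  rw [union_comm] at hC₃
  have hgC₃ : g ∉ C₃ := fun h => (hC₃ h).2 rfl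
  have hgC₄ : g ∉ C₄ := fun h => (hC₄ h).2 rfl
  obtain ⟨x, hxC₃, hx₂⟩ := not_subset.1 (hC₂.not_subset_of_mem_of_notMem hC₃' hg₂ hgC₃)
  have hx₁ : x ∈ C₁ := (hC₃ hxC₃).1.resolve_right hx₂
  have hsub : C₁ ∪ C₃ ⊆ C₁ ∪ C₂ := union_subset subset_union_left (hC₃.trans sdiff_subset)
  rcases hsub.ssubset_or_eq with hlt | heq
  · obtain ⟨C, hC, hC'⟩ := ih _ (hn ▸ ncard_lt_ncard hlt) hC₁ hC₃' hx₁ hxC₃ he hfC₃ rfl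
    exact ⟨C, hC.trans hsub, hC'⟩
  -- now `C₂ \ C₁ ⊆ C₃`, so `C₄`, which leaves `C₁`, meets `C₃`
  obtain ⟨y, hyC₄, hy₁⟩ := not_subset.1 (hC₁.not_subset_of_mem_of_notMem hC₄' hg₁ hgC₄)
  have hyC₃ : y ∈ C₃ := ((heq ▸ (hC₄ hyC₄).1 : y ∈ C₁ ∪ C₃)).resolve_left hy₁
  have hsub' : C₄ ∪ C₃ ⊆ (C₁ ∪ C₂) \ {g} := union_subset hC₄ hC₃
  obtain ⟨C, hC, hC'⟩ := ih _ (hn ▸ ncard_lt_ncard (hsub'.trans_ssubset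
    (sdiff_singleton_ssubset.2 (Or.inl hg₁)))) hC₄' hC₃' hyC₄ hyC₃ heC₄ hfC₃ rfl
  exact ⟨C, hC.trans (hsub'.trans sdiff_subset), hC'⟩

lemma exists_isCircuit_insert {u v : V} (hC : IsCircuit C) (hu : u ∈ edgeVerts C)
    (hv : v ∈ edgeVerts C) (huv : u ≠ v) (huvC : s(u, v) ∉ C) :
    ∃ C₀ ⊆ insert s(u, v) C, IsCircuit C₀ ∧ s(u, v) ∈ C₀ ∧ (C₀ ∩ C).Nonempty := by
  obtain ⟨g, hg⟩ := hC.nonempty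
  -- trading `g` for `s(u, v)` keeps the edge count and does not add vertices
  set X := insert s(u, v) (C \ {g})
  have hXV : edgeVerts X ⊆ edgeVerts C := by
    rintro w ⟨x, hx | hx, hwx⟩
    · subst hx; rcases Sym2.mem_iff.1 hwx with rfl | rfl <;> assumption
    · exact ⟨x, hx.1, hwx⟩
  have hXdep : ¬ IsSparse X := by
    refine not_isSparse_of_lt (insert_nonempty _ _) ?_
    have h1 : X.ncard = _ := ncard_insert_of_notMem (fun h => huvC h.1) (toFinite (C \ {g}))
    have h2 := ncard_sdiff_singleton_of_mem hg
    have h3 := ncard_le_ncard hXV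
    have h4 := hC.ncard_add_one
    have h5 := (ncard_pos (toFinite C)).2 ⟨g, hg⟩
    omega
  obtain ⟨C₀, hC₀X, hC₀⟩ := exists_isCircuit_subset hXdep
  have hXC : X ⊆ insert s(u, v) C := insert_subset_insert sdiff_subset
  have huvC₀ : s(u, v) ∈ C₀ := by
    by_contra h
    have hC₀C : C₀ ⊆ C \ {g} := fun x hx => (hC₀X hx).resolve_left (ne_of_mem_of_not_mem hx h)
    exact hC₀.not_isSparse ((hC.isSparse_of_ssubset (sdiff_singleton_ssubset.2 hg)).anti hC₀C)
  obtain ⟨x, hxC₀, hx⟩ := not_subset.1 fun h =>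
    hC₀.not_isSparse ((isSparse_singleton huv).anti h)
  exact ⟨C₀, hC₀X.trans hXC, hC₀, huvC₀, x, hxC₀,
    (hXC (hC₀X hxC₀)).resolve_left hx⟩

end IsCircuit

end Sparsity

open Sparsity

lemma SimpleGraph.edgeSet_eq_insert_of_adj_iff {V : Type*} {G G' : SimpleGraph V} {a b : V}
    (hG' : ∀ u v : V, G'.Adj u v ↔ (G.Adj u v ∨ (u = a ∧ v = b) ∨ (u = b ∧ v = a))) :
    G'.edgeSet = insert s(a, b) G.edgeSet := by
  ext ⟨u, v⟩; simp [hG', or_comm]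

lemma M22Connected.exists_isCircuit_insert {V : Type*} [Finite V] {G : SimpleGraph V}
    (hM : M22Connected G) {a b : V} (hab : a ≠ b) (hnadj : ¬ G.Adj a b) {f : Sym2 V}
    (hf : f ∈ G.edgeSet) :
    ∃ C ⊆ insert s(a, b) G.edgeSet, IsCircuit C ∧ s(a, b) ∈ C ∧ f ∈ C := by
  obtain ⟨wa, hwa⟩ := hM.1 a
  obtain ⟨wb, hwb⟩ := hM.1 b
  obtain ⟨C, hC, haC, hbC⟩ := hM.2.2 s(a, wa) hwa s(b, wb) hwb
  rw [isCircuitEdges_iff] at hC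
  obtain ⟨C₀, hC₀, hC₀', habC₀, g, hgC₀, hgC⟩ := hC.2.exists_isCircuit_insert
    ⟨_, haC, Sym2.mem_mk_left a wa⟩ ⟨_, hbC, Sym2.mem_mk_left b wb⟩ hab
    (fun h => hnadj (hC.1 h))
  obtain ⟨Cf, hCf, hgCf, hfCf⟩ := hM.2.2 g (hC.1 hgC) f hf
  rw [isCircuitEdges_iff] at hCf
  obtain ⟨F, hF, hF'⟩ := hC₀'.exists_common_isCircuit hCf.2 hgC₀ hgCf habC₀ hfCf
  exact ⟨F, hF.trans (union_subset (hC₀.trans (insert_subset_insert hC.1))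
    (hCf.1.trans (subset_insert _ _))), hF'⟩

/-- Adding a new edge between two non-adjacent vertices of an `M(2,2)`-connected
graph yields an `M(2,2)`-connected graph. -/
theorem addEdge_M22Connected {V : Type*} [Fintype V]
    (G : SimpleGraph V) (hM : M22Connected G)
    (a b : V) (hab : a ≠ b) (hnadj : ¬ G.Adj a b)
    (G' : SimpleGraph V)
    (hG' : ∀ u v : V, G'.Adj u v ↔
      (G.Adj u v ∨ (u = a ∧ v = b) ∨ (u = b ∧ v = a))) :
    M22Connected G' := by
  have hE' := SimpleGraph.edgeSet_eq_insert_of_adj_iff hG'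
  have hGG' : G.edgeSet ⊆ G'.edgeSet := hE' ▸ subset_insert _ _
  have hnew : ∀ e ∈ G'.edgeSet, ∃ C ⊆ G'.edgeSet, IsCircuit C ∧ s(a, b) ∈ C ∧ e ∈ C := by
    intro e he
    rw [hE'] at he ⊢
    rcases he with rfl | he
    · obtain ⟨f, hf⟩ : G.edgeSet.Nonempty :=
        nonempty_of_ncard_ne_zero (by have := hM.2.1; omega)
      obtain ⟨C, hC, hC', habC, -⟩ := hM.exists_isCircuit_insert hab hnadj hf
      exact ⟨C, hC, hC', habC, habC⟩
    · exact hM.exists_isCircuit_insert hab hnadj he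
  refine ⟨fun v => (hM.1 v).imp fun w hw => (hG' v w).2 (Or.inl hw),
    hM.2.1.trans (ncard_le_ncard hGG'), fun e he f hf => ?_⟩
  obtain ⟨Ce, hCe, hCe', habe, heCe⟩ := hnew e he
  obtain ⟨Cf, hCf, hCf', habf, hfCf⟩ := hnew f hf
  obtain ⟨C, hC, hC', heC, hfC⟩ := hCe'.exists_common_isCircuit hCf' habe habf heCe hfCf
  exact ⟨C, isCircuitEdges_iff.2 ⟨hC.trans (union_subset hCe hCf), hC'⟩, heC, hfC⟩
end

section
/- Let G be an M(2,2)-connected graph with an ear decomposition C₁, …, C_t (t ≥ 2) of its (2,2)-sparsity matroid, let H_i be the subgraph induced by C_i, Y = V(H_t) \ ⋃_{i<t} V(H_i) and X = V(H_t) \ Y. If Y is non-empty, then X is critical in H_t, i.e. the number of edges of H_t induced by X equals 2|X| - 2. -/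
/-! Along the ear decomposition every partial union `D` has full rank `2|V(D)| - 2`: adding an
ear `C` with new vertices `Y` raises the rank by at least `|C \ D| - 1` (minimality of the ear),
and `|C \ D| ≥ 2|Y| + 1` because the edges of `C` spanned by the old vertices form a proper
subgraph of the circuit `C`. At the last ear the rank of `D ∪ C` is at most `2|V(D ∪ C)| - 2`,
so `|C \ D| ≤ 2|Y| + 1`. Hence the edges of `C` induced by `X` (which include `C ∩ D`) number at
least `|C| - 2|Y| - 1 = 2|X| - 2`, and at most `2|X| - 2` since they form a proper subgraph of
the circuit `C`. -/

section
variable {V : Type*} {G : SimpleGraph V} {A B C Cf Cl D : Set (Sym2 V)}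

lemma edgeVerts_mono (h : A ⊆ B) : edgeVerts A ⊆ edgeVerts B :=
  fun _ ⟨e, he, hv⟩ => ⟨e, h he, hv⟩

@[simp]
lemma edgeVerts_empty : edgeVerts (∅ : Set (Sym2 V)) = ∅ := by
  simp [edgeVerts]

lemma edgeVerts_union (A B : Set (Sym2 V)) :
    edgeVerts (A ∪ B) = edgeVerts A ∪ edgeVerts B := by
  ext v; simp only [edgeVerts, Set.mem_union, Set.mem_ofPred_eq, or_and_right, exists_or]

lemma edgeVerts_biUnion {ι : Type*} (s : Set ι) (f : ι → Set (Sym2 V)) :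
    edgeVerts (⋃ i ∈ s, f i) = ⋃ i ∈ s, edgeVerts (f i) := by
  ext v; simp only [edgeVerts, Set.mem_iUnion, Set.mem_ofPred_eq]; grind

lemma inter_subset_induced (Cl D : Set (Sym2 V)) :
    Cl ∩ D ⊆ {e ∈ Cl | ∀ v ∈ e, v ∈ edgeVerts Cl ∩ edgeVerts D} :=
  fun e ⟨heCl, heD⟩ => ⟨heCl, fun _ hv => ⟨⟨e, heCl, hv⟩, ⟨e, heD, hv⟩⟩⟩

def Sparse (S : Set (Sym2 V)) : Prop :=
  ∀ D ⊆ S, D.Nonempty → D.ncard + 2 ≤ 2 * (edgeVerts D).ncard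

/-- `D` attains the largest possible rank `2|V(D)| - 2` in the `(2,2)`-sparsity matroid. -/
def FullRank (D : Set (Sym2 V)) : Prop :=
  ∃ I ⊆ D, Sparse I ∧ 2 * (edgeVerts D).ncard ≤ I.ncard + 2

structure IsEar (G : SimpleGraph V) (D Cl : Set (Sym2 V)) : Prop where
  circuit : IsCircuitEdges G Cl
  inter_nonempty : (Cl ∩ D).Nonempty
  diff_nonempty : (Cl \ D).Nonempty
  minimal : ∀ C' : Set (Sym2 V), IsCircuitEdges G C' → (C' ∩ D).Nonempty →
    (C' \ D).Nonempty → ¬ (C' \ D ⊂ Cl \ D)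

lemma Sparse.mono (hB : Sparse B) (hAB : A ⊆ B) : Sparse A :=
  fun D hD => hB D (hD.trans hAB)

lemma sparse_singleton {e : Sym2 V} (he : ¬ e.IsDiag) : Sparse {e} := by
  intro D hD hne
  obtain rfl := hne.subset_singleton_iff.mp hD
  induction e using Sym2.ind with
  | _ a b =>
    have hab : a ≠ b := by simpa using he
    have hverts : edgeVerts {s(a, b)} = {a, b} := by ext; simp [edgeVerts]
    rw [hverts, Set.ncard_singleton, Set.ncard_pair hab]
    omega

namespace IsCircuitEdges

lemma nonempty (hC : IsCircuitEdges G C) : C.Nonempty := by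
  rw [Set.nonempty_iff_ne_empty]
  rintro rfl
  simpa using hC.2.1

lemma sparse_of_ssubset (hC : IsCircuitEdges G C) (hDC : D ⊂ C) : Sparse D :=
  fun E hE hne => hC.2.2 E (hE.trans hDC.subset) (hE.trans_ssubset hDC).ne hne.ne_empty

lemma not_sparse (hC : IsCircuitEdges G C) : ¬ Sparse C := fun h => by
  have := h C subset_rfl hC.nonempty
  have := hC.2.1
  omega

lemma eq_of_subset (hC : IsCircuitEdges G C) (hD : IsCircuitEdges G D) (hDC : D ⊆ C) :
    D = C := by
  by_contra hne
  exact hD.not_sparse (hC.sparse_of_ssubset (hDC.ssubset_of_ne hne))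

end IsCircuitEdges

lemma IsEar.diff_subset_of_isCircuitEdges (hE : IsEar G D Cl) (hCf : IsCircuitEdges G Cf)
    (hsub : Cf \ D ⊆ Cl \ D) (hne : (Cf \ D).Nonempty) : Cl \ D ⊆ Cf := by
  by_cases hmeet : (Cf ∩ D).Nonempty
  · have hsame := (hsub.eq_or_ssubset).resolve_right (hE.minimal Cf hCf hmeet hne)
    exact hsame ▸ Set.sdiff_subset
  · have hCfCl : Cf ⊆ Cl := fun x hx => (hsub ⟨hx, fun hxD => hmeet ⟨x, hx, hxD⟩⟩).1
    rw [← hE.circuit.eq_of_subset hCf hCfCl]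
    exact Set.sdiff_subset

end

section
variable {V : Type*} [Finite V] {G : SimpleGraph V} {B C Cl D I : Set (Sym2 V)} {X : Set V}

lemma ncard_edgeVerts_union (D Cl : Set (Sym2 V)) :
    (edgeVerts (D ∪ Cl)).ncard = (edgeVerts D).ncard + (edgeVerts Cl \ edgeVerts D).ncard := by
  rw [edgeVerts_union, Set.union_comm, ← Set.ncard_sdiff_add_ncard, add_comm]

lemma Sparse.ncard_add_two_le (hB : Sparse B) (hne : B.Nonempty) (hBD : B ⊆ D) :
    B.ncard + 2 ≤ 2 * (edgeVerts D).ncard := by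
  have := Set.ncard_le_ncard (edgeVerts_mono hBD)
  have := hB B subset_rfl hne
  omega

lemma isCircuitEdges_of_minimal (hCG : C ⊆ G.edgeSet)
    (hmin : Minimal (fun S => ¬ Sparse S) C) : IsCircuitEdges G C := by
  have hsub : ∀ D ⊂ C, Sparse D := fun D hD => not_not.mp (hmin.not_prop_of_lt hD)
  obtain ⟨D, hDC, hne, hlt⟩ : ∃ D ⊆ C, D.Nonempty ∧ 2 * (edgeVerts D).ncard < D.ncard + 2 := by
    simpa [Sparse] using hmin.prop
  have hD : D = C := by
    by_contra hDC'
    have := hsub D (hDC.ssubset_of_ne hDC') D subset_rfl hne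
    omega
  rw [hD] at hne hlt
  obtain ⟨e, he⟩ := hne
  have hrest : (C \ {e}).Nonempty := Set.sdiff_nonempty.mpr fun hCe =>
    hmin.prop ((sparse_singleton (G.not_isDiag_of_mem_edgeSet (hCG he))).mono hCe)
  have := hsub _ (Set.sdiff_singleton_ssubset.mpr he) _ subset_rfl hrest
  have := Set.ncard_sdiff_singleton_add_one he
  have := Set.ncard_le_ncard (edgeVerts_mono (Set.sdiff_subset : C \ {e} ⊆ C))
  exact ⟨hCG, by omega, fun D hDC hne hD => hsub D (hDC.ssubset_of_ne hne) D subset_rfl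
    (Set.nonempty_iff_ne_empty.mpr hD)⟩

lemma Sparse.exists_circuit_of_not_sparse_insert {f : Sym2 V} (hB : Sparse B)
    (hfB : ¬ Sparse (insert f B)) (hG : insert f B ⊆ G.edgeSet) :
    ∃ Cf ⊆ insert f B, f ∈ Cf ∧ IsCircuitEdges G Cf := by
  obtain ⟨Cf, hCf, hmin⟩ := Finite.exists_le_minimal (p := fun S => ¬ Sparse S) hfB
  refine ⟨Cf, hCf, ?_, isCircuitEdges_of_minimal (hCf.trans hG) hmin⟩
  by_contra hf
  exact hmin.prop (hB.mono fun x hx => (hCf hx).resolve_left (by rintro rfl; exact hf hx))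

lemma IsCircuitEdges.fullRank (hC : IsCircuitEdges G C) : FullRank C := by
  obtain ⟨e, he⟩ := hC.nonempty
  refine ⟨C \ {e}, Set.sdiff_subset,
    hC.sparse_of_ssubset (Set.sdiff_singleton_ssubset.mpr he), ?_⟩
  have := Set.ncard_sdiff_singleton_add_one he
  have := hC.2.1
  omega

lemma IsCircuitEdges.ncard_induced_add_two_le (hC : IsCircuitEdges G C)
    (hX : X ⊂ edgeVerts C) (hin : ∃ e ∈ C, ∀ v ∈ e, v ∈ X) :
    {e ∈ C | ∀ v ∈ e, v ∈ X}.ncard + 2 ≤ 2 * X.ncard := by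
  obtain ⟨e, he, heX⟩ := hin
  obtain ⟨v, ⟨f, hf, hvf⟩, hvX⟩ := Set.exists_of_ssubset hX
  have hproper : {e ∈ C | ∀ v ∈ e, v ∈ X} ≠ C := by
    intro h
    rw [← h] at hf
    exact hvX (hf.2 v hvf)
  have := hC.2.2 _ (Set.sep_subset _ _) hproper (Set.nonempty_iff_ne_empty.mp ⟨e, he, heX⟩)
  have := Set.ncard_le_ncard
    (fun w ⟨f, hf, hwf⟩ => hf.2 w hwf : edgeVerts {e ∈ C | ∀ v ∈ e, v ∈ X} ⊆ X)
  omega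

namespace IsEar

/-- A maximal sparse extension `B` of `I` misses at most one edge of `Cl \ D`: the circuit that
a missed edge closes with `B` contains all of `Cl \ D`, by minimality of the ear. -/
lemma exists_sparse_extension (hE : IsEar G D Cl) (hDG : D ⊆ G.edgeSet)
    (hI : Sparse I) (hID : I ⊆ D) :
    ∃ B ⊆ D ∪ Cl, Sparse B ∧ I.ncard + (Cl \ D).ncard ≤ B.ncard + 1 := by
  obtain ⟨B, hIB, hBmax⟩ := Finite.exists_le_maximal (p := fun B => B ⊆ D ∪ Cl ∧ Sparse B)
    ⟨hID.trans Set.subset_union_left, hI⟩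
  obtain ⟨hBsub, hB⟩ := hBmax.prop
  have hmissed : ((Cl \ D) \ B).ncard ≤ 1 := by
    refine (Set.ncard_le_one).mpr fun f hf g hg => ?_
    have hfDCl : insert f B ⊆ D ∪ Cl := Set.insert_subset (Or.inr hf.1.1) hBsub
    have hfB : ¬ Sparse (insert f B) := fun h => hf.2 (hBmax.mem_of_prop_insert ⟨hfDCl, h⟩)
    obtain ⟨Cf, hCfB, hfCf, hCf⟩ := hB.exists_circuit_of_not_sparse_insert hfB
      (hfDCl.trans (Set.union_subset hDG hE.circuit.1))
    have hnew : Cf \ D ⊆ Cl \ D := fun x ⟨hxCf, hxD⟩ => by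
      rcases hCfB hxCf with rfl | hxB
      · exact hf.1
      · exact ⟨(hBsub hxB).resolve_left hxD, hxD⟩
    have hgCf := hE.diff_subset_of_isCircuitEdges hCf hnew ⟨f, hfCf, hf.1.2⟩ hg.1
    exact ((hCfB hgCf).resolve_right hg.2).symm
  have hold : I.ncard ≤ (B ∩ D).ncard := Set.ncard_le_ncard (Set.subset_inter hIB hID)
  have hkept : ((Cl \ D) ∩ B).ncard ≤ (B \ D).ncard :=
    Set.ncard_le_ncard fun x ⟨⟨_, hxD⟩, hxB⟩ => ⟨hxB, hxD⟩
  have := Set.ncard_inter_add_ncard_sdiff_eq_ncard (Cl \ D) B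
  have := Set.ncard_inter_add_ncard_sdiff_eq_ncard B D
  exact ⟨B, hBsub, hB, by omega⟩

lemma ncard_induced_add_two_le (hE : IsEar G D Cl)
    (hY : (edgeVerts Cl \ edgeVerts D).Nonempty) :
    {e ∈ Cl | ∀ v ∈ e, v ∈ edgeVerts Cl ∩ edgeVerts D}.ncard + 2 ≤
      2 * (edgeVerts Cl ∩ edgeVerts D).ncard := by
  obtain ⟨e, he⟩ := hE.inter_nonempty
  obtain ⟨y, hyCl, hyD⟩ := hY
  exact hE.circuit.ncard_induced_add_two_le
    (Set.ssubset_iff_subset_ne.mpr ⟨Set.inter_subset_left, fun h => hyD (h ▸ hyCl).2⟩)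
    ⟨e, inter_subset_induced Cl D he⟩

lemma two_mul_ncard_add_one_le (hE : IsEar G D Cl) :
    2 * (edgeVerts Cl \ edgeVerts D).ncard + 1 ≤ (Cl \ D).ncard := by
  rcases (edgeVerts Cl \ edgeVerts D).eq_empty_or_nonempty with hY | hY
  · rw [hY, Set.ncard_empty]
    exact (Set.ncard_pos).mpr hE.diff_nonempty
  have := hE.ncard_induced_add_two_le hY
  have := Set.ncard_le_ncard (inter_subset_induced Cl D)
  have := Set.ncard_inter_add_ncard_sdiff_eq_ncard Cl D
  have := Set.ncard_inter_add_ncard_sdiff_eq_ncard (edgeVerts Cl) (edgeVerts D)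
  have := hE.circuit.2.1
  omega

end IsEar

namespace FullRank

lemma union_of_isEar (hD : FullRank D) (hE : IsEar G D Cl) (hDG : D ⊆ G.edgeSet) :
    FullRank (D ∪ Cl) := by
  obtain ⟨I, hID, hI, hrank⟩ := hD
  obtain ⟨B, hB, hBsp, hgain⟩ := hE.exists_sparse_extension hDG hI hID
  have := hE.two_mul_ncard_add_one_le
  have := ncard_edgeVerts_union D Cl
  exact ⟨B, hB, hBsp, by omega⟩

lemma ncard_diff_le (hD : FullRank D) (hE : IsEar G D Cl) (hDG : D ⊆ G.edgeSet) :
    (Cl \ D).ncard ≤ 2 * (edgeVerts Cl \ edgeVerts D).ncard + 1 := by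
  obtain ⟨I, hID, hI, hrank⟩ := hD
  obtain ⟨B, hB, hBsp, hgain⟩ := hE.exists_sparse_extension hDG hI hID
  rcases B.eq_empty_or_nonempty with rfl | hBne
  · simp only [Set.ncard_empty] at hgain
    omega
  have := hBsp.ncard_add_two_le hBne hB
  have := ncard_edgeVerts_union D Cl
  omega

end FullRank

lemma IsEar.ncard_induced_add_two_eq (hE : IsEar G D Cl) (hD : FullRank D)
    (hDG : D ⊆ G.edgeSet) (hY : (edgeVerts Cl \ edgeVerts D).Nonempty) :
    {e ∈ Cl | ∀ v ∈ e, v ∈ edgeVerts Cl ∩ edgeVerts D}.ncard + 2 =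
      2 * (edgeVerts Cl ∩ edgeVerts D).ncard := by
  have := hE.ncard_induced_add_two_le hY
  have := hD.ncard_diff_le hE hDG
  have := Set.ncard_le_ncard (inter_subset_induced Cl D)
  have := Set.ncard_inter_add_ncard_sdiff_eq_ncard Cl D
  have := Set.ncard_inter_add_ncard_sdiff_eq_ncard (edgeVerts Cl) (edgeVerts D)
  have := hE.circuit.2.1
  omega

lemma fullRank_biUnion_Iio {t : ℕ} {C : Fin t → Set (Sym2 V)}
    (hcirc : ∀ i, IsCircuitEdges G (C i))
    (hear : ∀ i : Fin t, 0 < (i : ℕ) → IsEar G (⋃ j ∈ Set.Iio i, C j) (C i))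
    (i : Fin t) (hi : 0 < (i : ℕ)) : FullRank (⋃ j ∈ Set.Iio i, C j) := by
  obtain ⟨n, hn⟩ := i
  induction n with
  | zero => exact absurd hi (lt_irrefl 0)
  | succ n ih =>
    have hIio : Set.Iio (⟨n + 1, hn⟩ : Fin t) =
        insert ⟨n, by omega⟩ (Set.Iio ⟨n, by omega⟩) := by
      ext ⟨k, hk⟩
      simp only [Set.mem_Iio, Set.mem_insert_iff, Fin.mk_lt_mk, Fin.mk.injEq]
      omega
    rw [hIio, Set.biUnion_insert, Set.union_comm]
    rcases Nat.eq_zero_or_pos n with rfl | hpos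
    · simpa [Fin.lt_def] using (hcirc ⟨0, by omega⟩).fullRank
    · exact (ih (by omega) hpos).union_of_isEar (hear _ hpos)
        (Set.iUnion₂_subset fun j _ => (hcirc j).1)

end

theorem ear_decomposition_X_critical_general {V : Type*} [Fintype V]
    (G : SimpleGraph V)
    (t : ℕ) (ht : 2 ≤ t) (C : Fin t → Set (Sym2 V))
    (hcirc : ∀ i : Fin t, IsCircuitEdges G (C i))
    (hE1 : ∀ i : Fin t, 0 < (i : ℕ) → (C i ∩ ⋃ j ∈ Set.Iio i, C j).Nonempty)
    (hE2 : ∀ i : Fin t, 0 < (i : ℕ) → (C i \ ⋃ j ∈ Set.Iio i, C j).Nonempty)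
    (hE3 : ∀ i : Fin t, 0 < (i : ℕ) → ∀ C' : Set (Sym2 V), IsCircuitEdges G C' →
      (C' ∩ ⋃ j ∈ Set.Iio i, C j).Nonempty →
      (C' \ ⋃ j ∈ Set.Iio i, C j).Nonempty →
      ¬ ((C' \ ⋃ j ∈ Set.Iio i, C j) ⊂ (C i \ ⋃ j ∈ Set.Iio i, C j)))
    (last : Fin t) (hlast : (last : ℕ) = t - 1)
    (Y : Set V) (hY : Y = edgeVerts (C last) \ ⋃ j ∈ Set.Iio last, edgeVerts (C j))
    (X : Set V) (hX : X = edgeVerts (C last) \ Y)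
    (hYne : Y.Nonempty) :
    {e ∈ C last | ∀ v ∈ e, v ∈ X}.ncard + 2 = 2 * X.ncard := by
  have hear : ∀ i : Fin t, 0 < (i : ℕ) → IsEar G (⋃ j ∈ Set.Iio i, C j) (C i) :=
    fun i hi => ⟨hcirc i, hE1 i hi, hE2 i hi, hE3 i hi⟩
  have hpos : 0 < (last : ℕ) := by omega
  rw [← edgeVerts_biUnion] at hY
  rw [hY, Set.sdiff_sdiff_right_self] at hX
  subst hX hY
  exact (hear last hpos).ncard_induced_add_two_eq (fullRank_biUnion_Iio hcirc hear last hpos)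
    (Set.iUnion₂_subset fun j _ => (hcirc j).1) hYne

/-- Let `G` be `M(2,2)`-connected with an ear decomposition `C 0, …, C (t-1)`
(`t ≥ 2`) of its `(2,2)`-sparsity matroid, `H_i` the subgraph induced by `C i`,
`Y = V(H_t) \ ⋃_{i<t} V(H_i)` and `X = V(H_t) \ Y`.  If `Y ≠ ∅`, then `X` is
critical in `H_t`: the number of edges of `H_t` induced by `X` is `2|X| - 2`. -/
theorem ear_decomposition_X_critical {V : Type*} [Fintype V]
    (G : SimpleGraph V) (hM : M22Connected G)
    (t : ℕ) (ht : 2 ≤ t) (C : Fin t → Set (Sym2 V))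
    (hcirc : ∀ i : Fin t, IsCircuitEdges G (C i))
    (hE1 : ∀ i : Fin t, 0 < (i : ℕ) → (C i ∩ ⋃ j ∈ Set.Iio i, C j).Nonempty)
    (hE2 : ∀ i : Fin t, 0 < (i : ℕ) → (C i \ ⋃ j ∈ Set.Iio i, C j).Nonempty)
    (hE3 : ∀ i : Fin t, 0 < (i : ℕ) → ∀ C' : Set (Sym2 V), IsCircuitEdges G C' →
      (C' ∩ ⋃ j ∈ Set.Iio i, C j).Nonempty →
      (C' \ ⋃ j ∈ Set.Iio i, C j).Nonempty →
      ¬ ((C' \ ⋃ j ∈ Set.Iio i, C j) ⊂ (C i \ ⋃ j ∈ Set.Iio i, C j)))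
    (hcover : (⋃ i : Fin t, C i) = G.edgeSet)
    (last : Fin t) (hlast : (last : ℕ) = t - 1)
    (Y : Set V) (hY : Y = edgeVerts (C last) \ ⋃ j ∈ Set.Iio last, edgeVerts (C j))
    (X : Set V) (hX : X = edgeVerts (C last) \ Y)
    (hYne : Y.Nonempty) :
    {e ∈ C last | ∀ v ∈ e, v ∈ X}.ncard + 2 = 2 * X.ncard :=
  ear_decomposition_X_critical_general G t ht C hcirc hE1 hE2 hE3 last hlast Y hY X hX hYne
end

section
/- Let G₁ and G₂ be vertex-disjoint (2,2)-circuits, let v_i be a degree-3 vertex of G_i with neighbourhood {a_i, b_i, c_i} for i = 1,2, and let G be the 3-join: the graph on (V(G₁) - v₁) ∪ (V(G₂) - v₂) with edge set (E(G₁) ∪ E(G₂)) minus the six edges incident to v₁ or v₂, plus the three new edges a₁a₂, b₁b₂, c₁c₂. Then G is a (2,2)-circuit. -/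
/-- The adjacency relation of the 3-join of `(G₁, G₂)` (before removing the
deleted vertices `v₁, v₂`): edges within each side are kept, and the former
neighbourhoods `{a₁,b₁,c₁}` and `{a₂,b₂,c₂}` are joined by a perfect matching. -/
def joinAdj {V₁ V₂ : Type*} (G₁ : SimpleGraph V₁) (G₂ : SimpleGraph V₂)
    (a₁ b₁ c₁ : V₁) (a₂ b₂ c₂ : V₂) : V₁ ⊕ V₂ → V₁ ⊕ V₂ → Prop
  | Sum.inl x, Sum.inl y => G₁.Adj x y
  | Sum.inr x, Sum.inr y => G₂.Adj x y
  | Sum.inl x, Sum.inr y => (x = a₁ ∧ y = a₂) ∨ (x = b₁ ∧ y = b₂) ∨ (x = c₁ ∧ y = c₂)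
  | Sum.inr x, Sum.inl y => (y = a₁ ∧ x = a₂) ∨ (y = b₁ ∧ x = b₂) ∨ (y = c₁ ∧ x = c₂)

/-!
Split a subgraph `H` of the 3-join into its parts `Hᵢ` in `Gᵢ - vᵢ` and its `m ≤ 3` matching
edges. Counting edges of the whole join gives `(|E₁| - 3) + (|E₂| - 3) + 3 = 2|V| - 1`.
For sparsity, a nonempty `Hᵢ` is a proper subgraph of the circuit `Gᵢ`, so
`|E(Hᵢ)| ≤ 2|V(Hᵢ)| - 2`; this settles `m ≤ 2`, since for `m > 0` both parts are nonempty.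
If `m = 3`, every neighbour of `vᵢ` lies in `Hᵢ`, and putting `vᵢ` back with its three edges
gives `|E(Hᵢ)| ≤ 2|V(Hᵢ)| - 3` unless `Hᵢ = Gᵢ - vᵢ`. Both parts cannot be full since `H ≠ G`,
so the improved bound on one side again yields `|E(H)| ≤ 2|V(H)| - 2`.
-/

open Set Function

namespace SimpleGraph

variable {V : Type*} {G : SimpleGraph V}

theorem ncard_incidenceSet (v : V) : (G.incidenceSet v).ncard = (G.neighborSet v).ncard := by
  classical
  exact Nat.card_congr (G.incidenceSetEquivNeighborSet v)

namespace Subgraph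

theorem edgeSet_eq_empty_of_verts_eq_empty {K : G.Subgraph} (h : K.verts = ∅) :
    K.edgeSet = ∅ := by
  refine eq_empty_of_forall_notMem fun e he => ?_
  induction e using Sym2.ind with
  | _ x y => exact h.subset (K.edge_vert he)

def addStar (K : G.Subgraph) (v : V) : G.Subgraph where
  verts := K.verts ∪ insert v (G.neighborSet v)
  Adj x y := K.Adj x y ∨ G.Adj x y ∧ (x = v ∨ y = v)
  adj_sub h := h.elim K.adj_sub And.left
  edge_vert := by
    rintro x y (h | ⟨h, rfl | rfl⟩)
    · exact Or.inl (K.edge_vert h)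
    · exact Or.inr (mem_insert _ _)
    · exact Or.inr (mem_insert_of_mem _ h.symm)
  symm := ⟨fun _ _ => Or.imp K.adj_symm fun h => ⟨h.1.symm, h.2.symm⟩⟩

variable {K : G.Subgraph} {v : V}

theorem edgeSet_addStar : (K.addStar v).edgeSet = K.edgeSet ∪ G.incidenceSet v := by
  ext e
  induction e using Sym2.ind with
  | _ x y =>
    change K.Adj x y ∨ G.Adj x y ∧ (x = v ∨ y = v) ↔ K.Adj x y ∨ G.Adj x y ∧ v ∈ s(x, y)
    simp only [Sym2.mem_iff, eq_comm]

theorem ncard_verts_addStar [Finite V] (hv : v ∉ K.verts) (hN : G.neighborSet v ⊆ K.verts) :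
    (K.addStar v).verts.ncard = K.verts.ncard + 1 := by
  have : (K.addStar v).verts = insert v K.verts := by
    change K.verts ∪ insert v (G.neighborSet v) = _
    rw [union_insert, union_eq_self_of_subset_right hN]
  rw [this, ncard_insert_of_notMem hv]

theorem ncard_edgeSet_addStar [Finite V] (hv : v ∉ K.verts) :
    (K.addStar v).edgeSet.ncard = K.edgeSet.ncard + (G.neighborSet v).ncard := by
  have hdisj : Disjoint K.edgeSet (G.incidenceSet v) :=
    Set.disjoint_left.2 fun _ he hve => hv (K.mem_verts_of_mem_edge he hve.2)
  rw [edgeSet_addStar, ncard_union_eq hdisj, ncard_incidenceSet]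

theorem eq_deleteVerts_top_of_addStar (hv : v ∉ K.verts) (hN : G.neighborSet v ⊆ K.verts)
    (hverts : (K.addStar v).verts = univ) (hedges : (K.addStar v).edgeSet = G.edgeSet) :
    K = (⊤ : G.Subgraph).deleteVerts {v} := by
  have hK : ∀ x, x ∈ K.verts ↔ x ≠ v := fun x =>
    ⟨fun hx h => hv (h ▸ hx), fun hx => by
      rcases hverts.symm ▸ mem_univ x with hx' | rfl | hx'
      exacts [hx', absurd rfl hx, hN hx']⟩
  ext x y
  · simp [hK]
  · rw [deleteVerts_adj]
    constructor
    · intro h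
      exact ⟨trivial, (hK x).1 (K.edge_vert h), trivial, (hK y).1 (K.edge_vert h.symm), K.adj_sub h⟩
    · rintro ⟨-, hx, -, hy, h⟩
      have : s(x, y) ∈ (K.addStar v).edgeSet := hedges ▸ h
      rw [edgeSet_addStar] at this
      rcases this with h' | ⟨-, hxy⟩
      · exact h'
      · rcases Sym2.mem_iff.1 hxy with rfl | rfl
        exacts [absurd rfl hx, absurd rfl hy]

theorem edgeSet_deleteVerts_top_singleton :
    ((⊤ : G.Subgraph).deleteVerts {v}).edgeSet = G.edgeSet \ G.incidenceSet v := by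
  ext e
  induction e using Sym2.ind with
  | _ x y =>
    rw [Subgraph.mem_edgeSet, deleteVerts_adj]
    simp only [verts_top, mem_univ, mem_singleton_iff, top_adj, true_and, SimpleGraph.incidenceSet,
      sdiff_sep_self, mem_ofPred_eq, SimpleGraph.mem_edgeSet, Sym2.mem_iff, not_or]
    tauto

end Subgraph

theorem ncard_edgeSet_deleteVerts_top_add_ncard_neighborSet [Finite V] (v : V) :
    ((⊤ : G.Subgraph).deleteVerts {v}).edgeSet.ncard + (G.neighborSet v).ncard =
      G.edgeSet.ncard := by
  rw [Subgraph.edgeSet_deleteVerts_top_singleton, ← ncard_incidenceSet,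
    ncard_sdiff_add_ncard_of_subset (G.incidenceSet_subset v)]

theorem ncard_verts_deleteVerts_top_add_one [Finite V] (v : V) :
    ((⊤ : G.Subgraph).deleteVerts {v}).verts.ncard + 1 = Nat.card V := by
  rw [Subgraph.deleteVerts_verts, Subgraph.verts_top, ncard_sdiff_singleton_add_one (mem_univ v),
    ncard_univ]

end SimpleGraph

namespace IsCircuit22

open SimpleGraph

variable {V : Type*} [Fintype V] {G : SimpleGraph V}

theorem ncard_edgeSet_add_two_le_s18 (hG : IsCircuit22 G) {K : G.Subgraph} (hK : K.verts ≠ univ)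
    (hne : K.verts.Nonempty) : K.edgeSet.ncard + 2 ≤ 2 * K.verts.ncard := by
  rcases K.edgeSet.eq_empty_or_nonempty with h | h
  · have := (ncard_pos).2 hne
    rw [h, ncard_empty]
    omega
  · exact hG.2 K (Or.inl hK) h

theorem ncard_edgeSet_add_ncard_neighborSet_le (hG : IsCircuit22 G) {K : G.Subgraph} {v : V}
    (hv : v ∉ K.verts) (hN : G.neighborSet v ⊆ K.verts) (hdeg : (G.neighborSet v).Nonempty)
    (hK : K ≠ (⊤ : G.Subgraph).deleteVerts {v}) :
    K.edgeSet.ncard + (G.neighborSet v).ncard ≤ 2 * K.verts.ncard := by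
  have hproper : (K.addStar v).verts ≠ univ ∨ (K.addStar v).edgeSet ≠ G.edgeSet := by
    by_contra! h
    exact hK (K.eq_deleteVerts_top_of_addStar hv hN h.1 h.2)
  have hne : (K.addStar v).edgeSet.Nonempty := by
    obtain ⟨w, hw⟩ := hdeg
    exact ⟨s(v, w), Or.inr ⟨hw, Or.inl rfl⟩⟩
  have := hG.2 _ hproper hne
  rw [Subgraph.ncard_edgeSet_addStar hv, Subgraph.ncard_verts_addStar hv hN] at this
  omega

end IsCircuit22

namespace SimpleGraph.Subgraph

variable {X V : Type*} {P : X → Prop} {G : SimpleGraph (Subtype P)}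

/-- The part of `H` lying over `ι`, as a subgraph of `G₀`: for the 3-join, `ι = Sum.inl` gives
the part of `H` inside `G₁ - v₁`. -/
def pullback (H : G.Subgraph) (G₀ : SimpleGraph V) (ι : V → X) : G₀.Subgraph where
  verts := {x | ∃ u ∈ H.verts, u.1 = ι x}
  Adj x y := G₀.Adj x y ∧ ∃ u w, u.1 = ι x ∧ w.1 = ι y ∧ H.Adj u w
  adj_sub h := h.1
  edge_vert := fun ⟨_, u, _, hu, _, h⟩ => ⟨u, h.fst_mem, hu⟩
  symm := ⟨fun _ _ ⟨h, u, w, hu, hw, hH⟩ => ⟨h.symm, w, u, hw, hu, hH.symm⟩⟩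

variable {H : G.Subgraph} {G₀ : SimpleGraph V} {ι : V → X}

theorem mem_verts_of_mem_pullback {x : V} {u : Subtype P} (hx : x ∈ (H.pullback G₀ ι).verts)
    (hu : u.1 = ι x) : u ∈ H.verts := by
  obtain ⟨u', hu', h⟩ := hx
  rwa [Subtype.ext (hu.trans h.symm)]

theorem adj_of_pullback_adj {x y : V} {u w : Subtype P} (h : (H.pullback G₀ ι).Adj x y)
    (hu : u.1 = ι x) (hw : w.1 = ι y) : H.Adj u w := by
  obtain ⟨-, u', w', hu', hw', h⟩ := h
  rwa [Subtype.ext (hu.trans hu'.symm), Subtype.ext (hw.trans hw'.symm)]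

theorem mem_pullback_verts_of_mem_image {x : V} {z : Sym2 X}
    (hz : z ∈ Sym2.map Subtype.val '' H.edgeSet) (hx : ι x ∈ z) :
    x ∈ (H.pullback G₀ ι).verts := by
  obtain ⟨e, he, rfl⟩ := hz
  obtain ⟨u, hu, hux⟩ := Sym2.mem_map.1 hx
  exact ⟨u, H.mem_verts_of_mem_edge he hu, hux⟩

theorem image_pullback_verts :
    ι '' (H.pullback G₀ ι).verts = Subtype.val '' (H.verts ∩ Subtype.val ⁻¹' range ι) := by
  ext z
  constructor
  · rintro ⟨x, ⟨u, hu, hux⟩, rfl⟩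
    exact ⟨u, ⟨hu, x, hux.symm⟩, hux⟩
  · rintro ⟨u, ⟨hu, x, hx⟩, rfl⟩
    exact ⟨x, ⟨u, hu, hx.symm⟩, hx⟩

theorem image_pullback_edgeSet (hadj : ∀ x y (hx : P (ι x)) (hy : P (ι y)),
      G.Adj ⟨ι x, hx⟩ ⟨ι y, hy⟩ → G₀.Adj x y) :
    Sym2.map ι '' (H.pullback G₀ ι).edgeSet =
      Sym2.map Subtype.val '' (H.edgeSet ∩ (Subtype.val ⁻¹' range ι).sym2) := by
  ext z
  constructor
  · rintro ⟨e, he, rfl⟩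
    induction e using Sym2.ind with
    | _ x y =>
      obtain ⟨-, u, w, hu, hw, h⟩ := he
      exact ⟨s(u, w), ⟨h, ⟨x, hu.symm⟩, ⟨y, hw.symm⟩⟩, by simp [hu, hw]⟩
  · rintro ⟨e, ⟨he, hrange⟩, rfl⟩
    induction e using Sym2.ind with
    | _ u w =>
      obtain ⟨⟨x, hx⟩, ⟨y, hy⟩⟩ := hrange
      obtain ⟨u, hu⟩ := u
      obtain ⟨w, hw⟩ := w
      subst hx hy
      exact ⟨s(x, y), ⟨hadj x y hu hw (H.adj_sub he), _, _, rfl, rfl, he⟩, rfl⟩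

theorem ncard_pullback_verts (hι : Injective ι) :
    (H.pullback G₀ ι).verts.ncard = (H.verts ∩ Subtype.val ⁻¹' range ι).ncard := by
  rw [← ncard_image_of_injective _ hι, image_pullback_verts,
    ncard_image_of_injective _ Subtype.val_injective]

theorem ncard_pullback_edgeSet (hι : Injective ι) (hadj : ∀ x y (hx : P (ι x)) (hy : P (ι y)),
      G.Adj ⟨ι x, hx⟩ ⟨ι y, hy⟩ → G₀.Adj x y) :
    (H.pullback G₀ ι).edgeSet.ncard = (H.edgeSet ∩ (Subtype.val ⁻¹' range ι).sym2).ncard := by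
  rw [← ncard_image_of_injective _ (Sym2.map.injective hι), image_pullback_edgeSet hadj,
    ncard_image_of_injective _ (Sym2.map.injective Subtype.val_injective)]

theorem pullback_top {v : V} (hP : ∀ x, P (ι x) ↔ x ≠ v)
    (hadj : ∀ x y (hx : P (ι x)) (hy : P (ι y)), G.Adj ⟨ι x, hx⟩ ⟨ι y, hy⟩ ↔ G₀.Adj x y) :
    (⊤ : G.Subgraph).pullback G₀ ι = (⊤ : G₀.Subgraph).deleteVerts {v} := by
  ext x y
  · simp only [pullback, verts_top, mem_univ, true_and, mem_ofPred_eq, deleteVerts_verts,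
      mem_sdiff, mem_singleton_iff]
    exact ⟨fun ⟨u, hu⟩ => (hP x).1 (hu ▸ u.2), fun hx => ⟨⟨ι x, (hP x).2 hx⟩, rfl⟩⟩
  · rw [deleteVerts_adj]
    simp only [pullback, verts_top, top_adj, mem_univ, mem_singleton_iff, true_and]
    constructor
    · rintro ⟨h, ⟨u, hu⟩, ⟨w, hw⟩, rfl, rfl, -⟩
      exact ⟨(hP x).1 hu, (hP y).1 hw, h⟩
    · rintro ⟨hx, hy, h⟩
      exact ⟨h, _, _, rfl, rfl, (hadj x y ((hP x).2 hx) ((hP y).2 hy)).2 h⟩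

theorem mem_verts_of_pullback_eq {v : V} (hP : ∀ x, P (ι x) ↔ x ≠ v)
    (hfull : H.pullback G₀ ι = (⊤ : G₀.Subgraph).deleteVerts {v}) {u : Subtype P}
    (hu : u.1 ∈ range ι) : u ∈ H.verts := by
  obtain ⟨x, hx⟩ := hu
  refine mem_verts_of_mem_pullback (G₀ := G₀) (x := x) ?_ hx.symm
  rw [hfull]
  exact ⟨mem_univ x, (hP x).1 (hx ▸ u.2)⟩

theorem mem_edgeSet_of_pullback_eq {v : V} (hP : ∀ x, P (ι x) ↔ x ≠ v)
    (hadj : ∀ x y (hx : P (ι x)) (hy : P (ι y)), G.Adj ⟨ι x, hx⟩ ⟨ι y, hy⟩ ↔ G₀.Adj x y)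
    (hfull : H.pullback G₀ ι = (⊤ : G₀.Subgraph).deleteVerts {v}) {e : Sym2 (Subtype P)}
    (he : e ∈ G.edgeSet) (hrange : e ∈ (Subtype.val ⁻¹' range ι).sym2) : e ∈ H.edgeSet := by
  induction e using Sym2.ind with
  | _ u w =>
    obtain ⟨⟨x, hx⟩, ⟨y, hy⟩⟩ := hrange
    obtain ⟨u, hu⟩ := u
    obtain ⟨w, hw⟩ := w
    subst hx hy
    refine adj_of_pullback_adj (G₀ := G₀) (x := x) (y := y) ?_ rfl rfl
    rw [hfull, deleteVerts_adj]
    exact ⟨mem_univ x, (hP x).1 hu, mem_univ y, (hP y).1 hw, (hadj x y hu hw).1 he⟩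

end SimpleGraph.Subgraph

section SumVertices

open SimpleGraph Subgraph

variable {V₁ V₂ : Type*} {P : V₁ ⊕ V₂ → Prop} {G : SimpleGraph (Subtype P)}

def crossEdges (S : Set (Sym2 (Subtype P))) : Set (Sym2 (Subtype P)) :=
  S \ ((Subtype.val ⁻¹' range Sum.inl).sym2 ∪ (Subtype.val ⁻¹' range Sum.inr).sym2)

theorem crossEdges_mono {S T : Set (Sym2 (Subtype P))} (h : S ⊆ T) :
    crossEdges S ⊆ crossEdges T :=
  sdiff_subset_sdiff_left h

theorem disjoint_sym2_range_inl_range_inr :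
    Disjoint (Subtype.val ⁻¹' range (Sum.inl : V₁ → V₁ ⊕ V₂) : Set (Subtype P)).sym2
      (Subtype.val ⁻¹' range Sum.inr).sym2 := by
  rw [disjoint_iff_inter_eq_empty, ← sym2_inter, ← preimage_inter, range_inl_inter_range_inr,
    preimage_empty, sym2_empty]

theorem nonempty_pullback_verts_of_mem_crossEdges {e : Sym2 (Subtype P)}
    {H : G.Subgraph} (G₁ : SimpleGraph V₁) (G₂ : SimpleGraph V₂) (he : e ∈ crossEdges H.edgeSet) :
    (H.pullback G₁ Sum.inl).verts.Nonempty ∧ (H.pullback G₂ Sum.inr).verts.Nonempty := by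
  obtain ⟨he, hcross⟩ := he
  rw [mem_union, mem_sym2_iff_subset, mem_sym2_iff_subset, not_or, not_subset, not_subset] at hcross
  obtain ⟨⟨u, hu, hul⟩, ⟨w, hw, hwr⟩⟩ := hcross
  rw [mem_preimage, ← mem_compl_iff, compl_range_inl] at hul
  rw [mem_preimage, ← mem_compl_iff, compl_range_inr] at hwr
  obtain ⟨y, hy⟩ := hul
  obtain ⟨x, hx⟩ := hwr
  exact ⟨⟨x, w, H.mem_verts_of_mem_edge he hw, hx.symm⟩,
    ⟨y, u, H.mem_verts_of_mem_edge he hu, hy.symm⟩⟩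

variable [Finite V₁] [Finite V₂] (H : G.Subgraph) (G₁ : SimpleGraph V₁) (G₂ : SimpleGraph V₂)

theorem ncard_verts_eq_add :
    H.verts.ncard = (H.pullback G₁ Sum.inl).verts.ncard + (H.pullback G₂ Sum.inr).verts.ncard := by
  rw [ncard_pullback_verts Sum.inl_injective, ncard_pullback_verts Sum.inr_injective,
    ← compl_range_inl, preimage_compl, ← sdiff_eq, ncard_inter_add_ncard_sdiff_eq_ncard]

theorem ncard_edgeSet_eq_add
    (hadj₁ : ∀ x y (hx : P (.inl x)) (hy : P (.inl y)), G.Adj ⟨_, hx⟩ ⟨_, hy⟩ → G₁.Adj x y)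
    (hadj₂ : ∀ x y (hx : P (.inr x)) (hy : P (.inr y)), G.Adj ⟨_, hx⟩ ⟨_, hy⟩ → G₂.Adj x y) :
    H.edgeSet.ncard = (H.pullback G₁ Sum.inl).edgeSet.ncard +
      (H.pullback G₂ Sum.inr).edgeSet.ncard + (crossEdges H.edgeSet).ncard := by
  rw [ncard_pullback_edgeSet Sum.inl_injective hadj₁,
    ncard_pullback_edgeSet Sum.inr_injective hadj₂,
    ← ncard_union_eq (disjoint_sym2_range_inl_range_inr.mono inter_subset_right inter_subset_right),
    ← inter_union_distrib_left, crossEdges, ncard_inter_add_ncard_sdiff_eq_ncard]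

end SumVertices

section ThreeJoin

open SimpleGraph Subgraph

variable {V₁ V₂ : Type*} {G₁ : SimpleGraph V₁} {G₂ : SimpleGraph V₂} {v₁ a₁ b₁ c₁ : V₁}
  {v₂ a₂ b₂ c₂ : V₂} {G : SimpleGraph {w : V₁ ⊕ V₂ // w ≠ Sum.inl v₁ ∧ w ≠ Sum.inr v₂}}

theorem inl_ne_inl_and_ne_inr_iff (x : V₁) :
    ((Sum.inl x : V₁ ⊕ V₂) ≠ .inl v₁ ∧ (Sum.inl x : V₁ ⊕ V₂) ≠ .inr v₂) ↔ x ≠ v₁ := by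
  simp

theorem inr_ne_inl_and_ne_inr_iff (x : V₂) :
    ((Sum.inr x : V₁ ⊕ V₂) ≠ .inl v₁ ∧ (Sum.inr x : V₁ ⊕ V₂) ≠ .inr v₂) ↔ x ≠ v₂ := by
  simp

theorem notMem_pullback_inl_verts (H : G.Subgraph) : v₁ ∉ (H.pullback G₁ Sum.inl).verts :=
  fun ⟨u, _, hu⟩ => u.2.1 hu

theorem notMem_pullback_inr_verts (H : G.Subgraph) : v₂ ∉ (H.pullback G₂ Sum.inr).verts :=
  fun ⟨u, _, hu⟩ => u.2.2 hu

theorem adj_inl_inl_iff (hG : ∀ u w, G.Adj u w ↔ joinAdj G₁ G₂ a₁ b₁ c₁ a₂ b₂ c₂ u.1 w.1)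
    (x y : V₁) (hx hy) : G.Adj ⟨.inl x, hx⟩ ⟨.inl y, hy⟩ ↔ G₁.Adj x y :=
  hG _ _

theorem adj_inr_inr_iff (hG : ∀ u w, G.Adj u w ↔ joinAdj G₁ G₂ a₁ b₁ c₁ a₂ b₂ c₂ u.1 w.1)
    (x y : V₂) (hx hy) : G.Adj ⟨.inr x, hx⟩ ⟨.inr y, hy⟩ ↔ G₂.Adj x y :=
  hG _ _

theorem image_crossEdges_edgeSet
    (hG : ∀ u w, G.Adj u w ↔ joinAdj G₁ G₂ a₁ b₁ c₁ a₂ b₂ c₂ u.1 w.1)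
    (hn₁ : G₁.neighborSet v₁ = {a₁, b₁, c₁}) (hn₂ : G₂.neighborSet v₂ = {a₂, b₂, c₂}) :
    Sym2.map Subtype.val '' crossEdges G.edgeSet =
      {s(.inl a₁, .inr a₂), s(.inl b₁, .inr b₂), s(.inl c₁, .inr c₂)} := by
  ext z
  constructor
  · rintro ⟨e, ⟨he, hcross⟩, rfl⟩
    induction e using Sym2.ind with
    | _ u w =>
      have hj := (hG u w).1 he
      obtain ⟨u | u, hu⟩ := u <;> obtain ⟨w | w, hw⟩ := w
      · simp at hcross
      · simpa [joinAdj] using hj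
      · simpa [joinAdj, Sym2.eq_swap (a := Sum.inr u)] using hj
      · simp at hcross
  · have hne₁ : ∀ x ∈ G₁.neighborSet v₁, x ≠ v₁ := fun x hx => (G₁.ne_of_adj hx).symm
    have hne₂ : ∀ x ∈ G₂.neighborSet v₂, x ≠ v₂ := fun x hx => (G₂.ne_of_adj hx).symm
    rw [hn₁] at hne₁
    rw [hn₂] at hne₂
    rintro (rfl | rfl | rfl)
    all_goals
      refine ⟨s(⟨_, by simp_all, by simp⟩, ⟨_, by simp, by simp_all⟩), ⟨(hG _ _).2 ?_, ?_⟩, rfl⟩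
      · simp [joinAdj]
      · simp

theorem ncard_crossEdges_edgeSet [Finite V₁] [Finite V₂]
    (hG : ∀ u w, G.Adj u w ↔ joinAdj G₁ G₂ a₁ b₁ c₁ a₂ b₂ c₂ u.1 w.1)
    (hn₁ : G₁.neighborSet v₁ = {a₁, b₁, c₁}) (hd₁ : a₁ ≠ b₁ ∧ a₁ ≠ c₁ ∧ b₁ ≠ c₁)
    (hn₂ : G₂.neighborSet v₂ = {a₂, b₂, c₂}) :
    (crossEdges G.edgeSet).ncard = 3 := by
  rw [← ncard_image_of_injective _ (Sym2.map.injective Subtype.val_injective),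
    image_crossEdges_edgeSet hG hn₁ hn₂, ncard_eq_three]
  exact ⟨_, _, _, by simp [hd₁.1], by simp [hd₁.2.1], by simp [hd₁.2.2], rfl⟩

theorem neighborSet_subset_pullback_verts
    (hG : ∀ u w, G.Adj u w ↔ joinAdj G₁ G₂ a₁ b₁ c₁ a₂ b₂ c₂ u.1 w.1)
    (hn₁ : G₁.neighborSet v₁ = {a₁, b₁, c₁}) (hn₂ : G₂.neighborSet v₂ = {a₂, b₂, c₂})
    {H : G.Subgraph} (hC : crossEdges H.edgeSet = crossEdges G.edgeSet) :
    G₁.neighborSet v₁ ⊆ (H.pullback G₁ Sum.inl).verts ∧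
      G₂.neighborSet v₂ ⊆ (H.pullback G₂ Sum.inr).verts := by
  have hM : {s(.inl a₁, .inr a₂), s(.inl b₁, .inr b₂), s(.inl c₁, .inr c₂)} ⊆
      Sym2.map Subtype.val '' H.edgeSet := by
    rw [← image_crossEdges_edgeSet hG hn₁ hn₂, ← hC]
    exact image_mono sdiff_subset
  have hends {x y} (h : s(.inl x, .inr y) ∈ Sym2.map Subtype.val '' H.edgeSet) :
      x ∈ (H.pullback G₁ Sum.inl).verts ∧ y ∈ (H.pullback G₂ Sum.inr).verts :=
    ⟨mem_pullback_verts_of_mem_image h (Sym2.mem_mk_left _ _),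
      mem_pullback_verts_of_mem_image h (Sym2.mem_mk_right _ _)⟩
  rw [hn₁, hn₂]
  constructor <;> rintro x (rfl | rfl | rfl)
  exacts [(hends (y := a₂) (hM (by simp))).1, (hends (y := b₂) (hM (by simp))).1,
    (hends (y := c₂) (hM (by simp))).1, (hends (x := a₁) (hM (by simp))).2,
    (hends (x := b₁) (hM (by simp))).2, (hends (x := c₁) (hM (by simp))).2]

theorem eq_top_of_pullback_eq
    (hG : ∀ u w, G.Adj u w ↔ joinAdj G₁ G₂ a₁ b₁ c₁ a₂ b₂ c₂ u.1 w.1) {H : G.Subgraph}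
    (hfull₁ : H.pullback G₁ Sum.inl = (⊤ : G₁.Subgraph).deleteVerts {v₁})
    (hfull₂ : H.pullback G₂ Sum.inr = (⊤ : G₂.Subgraph).deleteVerts {v₂})
    (hC : crossEdges H.edgeSet = crossEdges G.edgeSet) :
    H.verts = univ ∧ H.edgeSet = G.edgeSet := by
  have hP₁ := inl_ne_inl_and_ne_inr_iff (v₁ := v₁) (v₂ := v₂)
  have hP₂ := inr_ne_inl_and_ne_inr_iff (v₁ := v₁) (v₂ := v₂)
  constructor
  · refine eq_univ_of_forall fun u => ?_
    rcases u with ⟨x | x, hu⟩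
    exacts [mem_verts_of_pullback_eq hP₁ hfull₁ ⟨x, rfl⟩,
      mem_verts_of_pullback_eq hP₂ hfull₂ ⟨x, rfl⟩]
  · refine (H.edgeSet_subset).antisymm fun e he => ?_
    by_cases h₁ : e ∈ (Subtype.val ⁻¹' range Sum.inl).sym2
    · exact mem_edgeSet_of_pullback_eq hP₁ (adj_inl_inl_iff hG) hfull₁ he h₁
    by_cases h₂ : e ∈ (Subtype.val ⁻¹' range Sum.inr).sym2
    · exact mem_edgeSet_of_pullback_eq hP₂ (adj_inr_inr_iff hG) hfull₂ he h₂
    exact (hC.symm ▸ ⟨he, by simp [h₁, h₂]⟩ : e ∈ crossEdges H.edgeSet).1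

theorem ncard_edgeSet_add_one_of_threeJoin [Finite V₁] [Finite V₂]
    (h₁ : G₁.edgeSet.ncard + 1 = 2 * Nat.card V₁) (h₂ : G₂.edgeSet.ncard + 1 = 2 * Nat.card V₂)
    (hn₁ : G₁.neighborSet v₁ = {a₁, b₁, c₁}) (hd₁ : a₁ ≠ b₁ ∧ a₁ ≠ c₁ ∧ b₁ ≠ c₁)
    (hn₂ : G₂.neighborSet v₂ = {a₂, b₂, c₂}) (hd₂ : a₂ ≠ b₂ ∧ a₂ ≠ c₂ ∧ b₂ ≠ c₂)
    (hG : ∀ u w, G.Adj u w ↔ joinAdj G₁ G₂ a₁ b₁ c₁ a₂ b₂ c₂ u.1 w.1) :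
    G.edgeSet.ncard + 1 = 2 * Nat.card {w : V₁ ⊕ V₂ // w ≠ Sum.inl v₁ ∧ w ≠ Sum.inr v₂} := by
  have hV := ncard_verts_eq_add (⊤ : G.Subgraph) G₁ G₂
  have hE := ncard_edgeSet_eq_add (⊤ : G.Subgraph) G₁ G₂
    (fun x y hx hy => (adj_inl_inl_iff hG x y hx hy).1)
    (fun x y hx hy => (adj_inr_inr_iff hG x y hx hy).1)
  have hK₁ := pullback_top (G := G) inl_ne_inl_and_ne_inr_iff (adj_inl_inl_iff hG)
  have hK₂ := pullback_top (G := G) inr_ne_inl_and_ne_inr_iff (adj_inr_inr_iff hG)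
  rw [hK₁, hK₂, verts_top, ncard_univ] at hV
  rw [hK₁, hK₂, Subgraph.edgeSet_top, ncard_crossEdges_edgeSet hG hn₁ hd₁ hn₂] at hE
  have hE₁ := ncard_edgeSet_deleteVerts_top_add_ncard_neighborSet (G := G₁) v₁
  have hE₂ := ncard_edgeSet_deleteVerts_top_add_ncard_neighborSet (G := G₂) v₂
  have hV₁ := ncard_verts_deleteVerts_top_add_one (G := G₁) v₁
  have hV₂ := ncard_verts_deleteVerts_top_add_one (G := G₂) v₂
  rw [hn₁, ncard_eq_three.2 ⟨_, _, _, hd₁.1, hd₁.2.1, hd₁.2.2, rfl⟩] at hE₁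
  rw [hn₂, ncard_eq_three.2 ⟨_, _, _, hd₂.1, hd₂.2.1, hd₂.2.2, rfl⟩] at hE₂
  omega

/-- With all three matching edges in `H`, each side contains the neighbourhood of `vᵢ`, and as
`H ≠ G` at least one side is not all of `Gᵢ - vᵢ`. -/
theorem ncard_pullback_edgeSet_add_three_le [Fintype V₁] [Fintype V₂]
    (h₁ : IsCircuit22 G₁) (h₂ : IsCircuit22 G₂)
    (hn₁ : G₁.neighborSet v₁ = {a₁, b₁, c₁}) (hd₁ : a₁ ≠ b₁ ∧ a₁ ≠ c₁ ∧ b₁ ≠ c₁)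
    (hn₂ : G₂.neighborSet v₂ = {a₂, b₂, c₂}) (hd₂ : a₂ ≠ b₂ ∧ a₂ ≠ c₂ ∧ b₂ ≠ c₂)
    (hG : ∀ u w, G.Adj u w ↔ joinAdj G₁ G₂ a₁ b₁ c₁ a₂ b₂ c₂ u.1 w.1) {H : G.Subgraph}
    (hH : H.verts ≠ univ ∨ H.edgeSet ≠ G.edgeSet)
    (hC : crossEdges H.edgeSet = crossEdges G.edgeSet) :
    (H.pullback G₁ Sum.inl).edgeSet.ncard + 3 ≤ 2 * (H.pullback G₁ Sum.inl).verts.ncard ∨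
      (H.pullback G₂ Sum.inr).edgeSet.ncard + 3 ≤ 2 * (H.pullback G₂ Sum.inr).verts.ncard := by
  obtain ⟨hN₁, hN₂⟩ := neighborSet_subset_pullback_verts hG hn₁ hn₂ hC
  have hdeg₁ : (G₁.neighborSet v₁).ncard = 3 :=
    hn₁ ▸ ncard_eq_three.2 ⟨_, _, _, hd₁.1, hd₁.2.1, hd₁.2.2, rfl⟩
  have hdeg₂ : (G₂.neighborSet v₂).ncard = 3 :=
    hn₂ ▸ ncard_eq_three.2 ⟨_, _, _, hd₂.1, hd₂.2.1, hd₂.2.2, rfl⟩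
  have hv₁ := notMem_pullback_inl_verts (G₁ := G₁) H
  have hv₂ := notMem_pullback_inr_verts (G₂ := G₂) H
  by_cases hf₁ : H.pullback G₁ Sum.inl = (⊤ : G₁.Subgraph).deleteVerts {v₁}
  · refine .inr (hdeg₂ ▸ h₂.ncard_edgeSet_add_ncard_neighborSet_le hv₂ hN₂
      (hn₂ ▸ insert_nonempty _ _) fun hf₂ => ?_)
    obtain ⟨hverts, hedges⟩ := eq_top_of_pullback_eq hG hf₁ hf₂ hC
    exact hH.elim (· hverts) (· hedges)
  · exact .inl (hdeg₁ ▸ h₁.ncard_edgeSet_add_ncard_neighborSet_le hv₁ hN₁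
      (hn₁ ▸ insert_nonempty _ _) hf₁)

theorem ncard_edgeSet_add_two_le_of_threeJoin [Fintype V₁] [Fintype V₂]
    (h₁ : IsCircuit22 G₁) (h₂ : IsCircuit22 G₂)
    (hn₁ : G₁.neighborSet v₁ = {a₁, b₁, c₁}) (hd₁ : a₁ ≠ b₁ ∧ a₁ ≠ c₁ ∧ b₁ ≠ c₁)
    (hn₂ : G₂.neighborSet v₂ = {a₂, b₂, c₂}) (hd₂ : a₂ ≠ b₂ ∧ a₂ ≠ c₂ ∧ b₂ ≠ c₂)
    (hG : ∀ u w, G.Adj u w ↔ joinAdj G₁ G₂ a₁ b₁ c₁ a₂ b₂ c₂ u.1 w.1) {H : G.Subgraph}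
    (hH : H.verts ≠ univ ∨ H.edgeSet ≠ G.edgeSet) (hne : H.edgeSet.Nonempty) :
    H.edgeSet.ncard + 2 ≤ 2 * H.verts.ncard := by
  have hV := ncard_verts_eq_add H G₁ G₂
  have hE := ncard_edgeSet_eq_add H G₁ G₂ (fun x y hx hy => (adj_inl_inl_iff hG x y hx hy).1)
    (fun x y hx hy => (adj_inr_inr_iff hG x y hx hy).1)
  have hCG : crossEdges H.edgeSet ⊆ crossEdges G.edgeSet := crossEdges_mono H.edgeSet_subset
  have hC3 := ncard_crossEdges_edgeSet hG hn₁ hd₁ hn₂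
  have hm : (crossEdges H.edgeSet).ncard ≤ 3 := hC3 ▸ ncard_le_ncard hCG
  have hm₃ (h : 3 ≤ (crossEdges H.edgeSet).ncard) :=
    ncard_pullback_edgeSet_add_three_le h₁ h₂ hn₁ hd₁ hn₂ hd₂ hG hH
      (eq_of_subset_of_ncard_le hCG (hC3 ▸ h))
  set K₁ := H.pullback G₁ Sum.inl
  set K₂ := H.pullback G₂ Sum.inr
  have hm₀ (h : (crossEdges H.edgeSet).ncard ≠ 0) : K₁.verts.ncard ≠ 0 ∧ K₂.verts.ncard ≠ 0 := by
    obtain ⟨e, he⟩ := nonempty_of_ncard_ne_zero h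
    obtain ⟨hK₁, hK₂⟩ := nonempty_pullback_verts_of_mem_crossEdges G₁ G₂ he
    exact ⟨((ncard_pos).2 hK₁).ne', ((ncard_pos).2 hK₂).ne'⟩
  have hK₁ (h : K₁.verts.ncard ≠ 0) : K₁.edgeSet.ncard + 2 ≤ 2 * K₁.verts.ncard :=
    h₁.ncard_edgeSet_add_two_le_s18 (fun h => notMem_pullback_inl_verts H (h ▸ mem_univ v₁))
      (nonempty_of_ncard_ne_zero h)
  have hK₂ (h : K₂.verts.ncard ≠ 0) : K₂.edgeSet.ncard + 2 ≤ 2 * K₂.verts.ncard :=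
    h₂.ncard_edgeSet_add_two_le_s18 (fun h => notMem_pullback_inr_verts H (h ▸ mem_univ v₂))
      (nonempty_of_ncard_ne_zero h)
  have hK₁₀ (h : K₁.verts.ncard = 0) : K₁.edgeSet.ncard = 0 := by
    rw [ncard_eq_zero] at h ⊢
    exact edgeSet_eq_empty_of_verts_eq_empty h
  have hK₂₀ (h : K₂.verts.ncard = 0) : K₂.edgeSet.ncard = 0 := by
    rw [ncard_eq_zero] at h ⊢
    exact edgeSet_eq_empty_of_verts_eq_empty h
  have hne' : H.edgeSet.ncard ≠ 0 := ((ncard_pos).2 hne).ne'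
  omega

end ThreeJoin

/-- **The 3-join of two `(2,2)`-circuits is a `(2,2)`-circuit.**
`G₁, G₂` are vertex-disjoint `(2,2)`-circuits, `v_i` is a degree-3 vertex of
`G_i` with neighbourhood `{a_i, b_i, c_i}`, and `G` is the graph on
`(V₁ - v₁) ⊕ (V₂ - v₂)` obtained by deleting `v₁, v₂` (and their incident
edges) and adding the matching `a₁a₂, b₁b₂, c₁c₂`. -/
theorem threeJoin_circuit22 {V₁ V₂ : Type*} [Fintype V₁] [Fintype V₂]
    [DecidableEq V₁] [DecidableEq V₂]
    (G₁ : SimpleGraph V₁) (G₂ : SimpleGraph V₂)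
    (h₁ : IsCircuit22 G₁) (h₂ : IsCircuit22 G₂)
    (v₁ a₁ b₁ c₁ : V₁) (v₂ a₂ b₂ c₂ : V₂)
    (hn₁ : G₁.neighborSet v₁ = {a₁, b₁, c₁})
    (hd₁ : a₁ ≠ b₁ ∧ a₁ ≠ c₁ ∧ b₁ ≠ c₁)
    (hn₂ : G₂.neighborSet v₂ = {a₂, b₂, c₂})
    (hd₂ : a₂ ≠ b₂ ∧ a₂ ≠ c₂ ∧ b₂ ≠ c₂)
    (G : SimpleGraph {w : V₁ ⊕ V₂ // w ≠ Sum.inl v₁ ∧ w ≠ Sum.inr v₂})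
    (hG : ∀ u w : {w : V₁ ⊕ V₂ // w ≠ Sum.inl v₁ ∧ w ≠ Sum.inr v₂},
      G.Adj u w ↔ joinAdj G₁ G₂ a₁ b₁ c₁ a₂ b₂ c₂ u.1 w.1) :
    IsCircuit22 G := by
  refine ⟨?_, fun H hH hne =>
    ncard_edgeSet_add_two_le_of_threeJoin h₁ h₂ hn₁ hd₁ hn₂ hd₂ hG hH hne⟩
  rw [← Nat.card_eq_fintype_card]
  exact ncard_edgeSet_add_one_of_threeJoin (Nat.card_eq_fintype_card (α := V₁) ▸ h₁.1)
    (Nat.card_eq_fintype_card (α := V₂) ▸ h₂.1) hn₁ hd₁ hn₂ hd₂ hG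
end

section
/- Let G = (V,E) be a (2,2)-circuit and v a degree-3 vertex with neighbours x, y, z. If the edge xy is not in E, then the graph G - v + xy (delete v and its three incident edges, then add edge xy) contains a unique (2,2)-circuit as a subgraph; moreover this unique circuit equals G - v + xy itself if and only if G - v + xy is a (2,2)-circuit. -/
/-- A subgraph `H` of `G` is (as an abstract graph on its vertex set) a
`(2,2)`-circuit. -/
def SubIsCircuit22 {V : Type*} {G : SimpleGraph V} (H : G.Subgraph) : Prop :=
  H.edgeSet.ncard + 1 = 2 * H.verts.ncard ∧
  ∀ K : G.Subgraph, K ≤ H → (K.verts ≠ H.verts ∨ K.edgeSet ≠ H.edgeSet) →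
    K.edgeSet.Nonempty → K.edgeSet.ncard + 2 ≤ 2 * K.verts.ncard

/-!
Deleting `v` from the circuit `G` leaves a graph in which every subgraph with an edge satisfies
`|E| ≤ 2|V| - 2`; hence in `G' = G - v + xy` every subgraph avoiding `xy` is `(2,2)`-sparse and
every subgraph satisfies `|E| ≤ 2|V| - 1`. Edge counting gives `|E(G')| = 2|V(G')| - 1`, so a
minimal subgraph with `|E| = 2|V| - 1` is a circuit. Every circuit of `G'` must contain `xy`, and
two distinct circuits `C₁, C₂` through `xy` are impossible: `C₁ ∩ C₂` is a proper subgraph of `C₁`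
with an edge, `C₁ ∪ C₂` has `|E| ≤ 2|V| - 1`, and the counts of `C₁ ∩ C₂` and `C₁ ∪ C₂` add up to
those of `C₁` and `C₂`.
-/

open Function Set

namespace SimpleGraph

variable {V : Type*}

lemma ncard_edgeSet_sup_edge [Finite V] {G : SimpleGraph V} {s t : V} (hn : ¬G.Adj s t)
    (h : s ≠ t) : (G ⊔ edge s t).edgeSet.ncard = G.edgeSet.ncard + 1 := by
  rw [edgeSet_sup, edgeSet_edge_of_ne h, union_singleton,
    ncard_insert_of_notMem (a := s(s, t)) hn (toFinite _)]

lemma ncard_edgeSet_comap_subtype_add_degree [Fintype V] [DecidableEq V] (G : SimpleGraph V)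
    [DecidableRel G.Adj] (v : V) :
    (G.comap (Subtype.val : {u // u ≠ v} → V)).edgeSet.ncard + G.degree v =
      G.edgeSet.ncard := by
  have hmap :
      (G.comap Subtype.val).map (Embedding.subtype (· ≠ v)) = G.deleteIncidenceSet v := by
    ext a b
    rw [map_adj, deleteIncidenceSet_adj]
    constructor
    · rintro ⟨a, b, h, rfl, rfl⟩
      exact ⟨h, a.2, b.2⟩
    · rintro ⟨h, ha, hb⟩
      exact ⟨⟨a, ha⟩, ⟨b, hb⟩, h, rfl, rfl⟩
  have himage := edgeSet_map (Embedding.subtype (· ≠ v)) (G.comap Subtype.val)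
  rw [hmap, edgeSet_deleteIncidenceSet] at himage
  rw [← ncard_image_of_injective _ (Embedding.injective _), ← himage,
    ← card_incidenceSet_eq_degree, ← toFinset_card, ← ncard_eq_toFinset_card',
    ncard_sdiff_add_ncard_of_subset (G.incidenceSet_subset v)]

namespace Subgraph

variable {G : SimpleGraph V}

lemma verts_ne_or_edgeSet_ne_of_ne {H K : G.Subgraph} (h : H ≠ K) :
    H.verts ≠ K.verts ∨ H.edgeSet ≠ K.edgeSet := by
  contrapose! h
  refine Subgraph.ext h.1 (spanningCoe_inj.1 (edgeSet_inj.1 ?_))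
  rw [edgeSet_spanningCoe, edgeSet_spanningCoe, h.2]

lemma edgeSet_deleteEdges (K : G.Subgraph) (s : Set (Sym2 V)) :
    (K.deleteEdges s).edgeSet = K.edgeSet \ s := by
  rw [← edgeSet_spanningCoe, ← deleteEdges_spanningCoe_eq, SimpleGraph.edgeSet_deleteEdges,
    edgeSet_spanningCoe]

end Subgraph

end SimpleGraph

open SimpleGraph

section

variable {V W : Type*} {G : SimpleGraph V}

lemma SubIsCircuit22.edgeSet_nonempty {C : G.Subgraph} (hC : SubIsCircuit22 C) :
    C.edgeSet.Nonempty :=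
  nonempty_of_ncard_ne_zero fun h => by have := hC.1; omega

lemma subIsCircuit22_top_iff [Fintype V] : SubIsCircuit22 (⊤ : G.Subgraph) ↔ IsCircuit22 G := by
  simp only [SubIsCircuit22, IsCircuit22, Subgraph.edgeSet_top, Subgraph.verts_top, ncard_univ,
    Nat.card_eq_fintype_card, le_top, true_imp_iff]

lemma exists_subIsCircuit22 [Finite V]
    (hsparse : ∀ K : G.Subgraph, K.edgeSet.Nonempty → K.edgeSet.ncard + 1 ≤ 2 * K.verts.ncard)
    {H : G.Subgraph} (hne : H.edgeSet.Nonempty)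
    (htight : 2 * H.verts.ncard ≤ H.edgeSet.ncard + 1) :
    ∃ C : G.Subgraph, SubIsCircuit22 C := by
  obtain ⟨C, hC⟩ := exists_minimal_of_wellFoundedLT
    (fun K : G.Subgraph => K.edgeSet.Nonempty ∧ 2 * K.verts.ncard ≤ K.edgeSet.ncard + 1)
    ⟨H, hne, htight⟩
  refine ⟨C, (hsparse C hC.prop.1).antisymm hC.prop.2, fun K hle hproper hK => ?_⟩
  by_contra! hbad
  obtain rfl := hC.eq_of_ge ⟨hK, by omega⟩ hle
  simp at hproper

lemma SubIsCircuit22.eq_of_edgeSet_inter_nonempty [Finite V] {C₁ C₂ : G.Subgraph}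
    (h₁ : SubIsCircuit22 C₁) (h₂ : SubIsCircuit22 C₂)
    (hinter : (C₁.edgeSet ∩ C₂.edgeSet).Nonempty)
    (hsup : (C₁ ⊔ C₂).edgeSet.ncard + 1 ≤ 2 * (C₁ ⊔ C₂).verts.ncard) :
    C₁ = C₂ := by
  by_contra hne
  have h₁card := h₁.1
  by_cases hle : C₁ ≤ C₂
  · have := h₂.2 C₁ hle (Subgraph.verts_ne_or_edgeSet_ne_of_ne hne) h₁.edgeSet_nonempty
    omega
  have hinf := h₁.2 (C₁ ⊓ C₂) inf_le_left
    (Subgraph.verts_ne_or_edgeSet_ne_of_ne (mt inf_eq_left.1 hle)) (by rwa [Subgraph.edgeSet_inf])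
  rw [Subgraph.edgeSet_inf, Subgraph.verts_inf] at hinf
  rw [Subgraph.edgeSet_sup, Subgraph.verts_sup] at hsup
  have := ncard_union_add_ncard_inter C₁.verts C₂.verts
  have := ncard_union_add_ncard_inter C₁.edgeSet C₂.edgeSet
  have := h₂.1
  omega

/-- `G - e` is `(2,2)`-sparse. -/
def IsSparse22Off (G : SimpleGraph V) (e : Sym2 V) : Prop :=
  ∀ K : G.Subgraph, e ∉ K.edgeSet → K.edgeSet.Nonempty →
    K.edgeSet.ncard + 2 ≤ 2 * K.verts.ncard

namespace IsSparse22Off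

variable {e : Sym2 V}

lemma ncard_edgeSet_add_one_le [Finite V] (h : IsSparse22Off G e) (K : G.Subgraph)
    (hK : K.edgeSet.Nonempty) : K.edgeSet.ncard + 1 ≤ 2 * K.verts.ncard := by
  by_cases he : e ∈ K.edgeSet
  swap
  · have := h K he hK
    omega
  have hdel : (K.deleteEdges {e}).edgeSet.ncard + 1 = K.edgeSet.ncard := by
    rw [Subgraph.edgeSet_deleteEdges]
    exact ncard_sdiff_singleton_add_one he (toFinite _)
  rcases (K.deleteEdges {e}).edgeSet.eq_empty_or_nonempty with h₀ | h₀
  · have hverts : 0 < K.verts.ncard :=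
      (ncard_pos (toFinite _)).2 ⟨_, Subgraph.mem_verts_of_mem_edge he (Sym2.out_fst_mem e)⟩
    rw [h₀, ncard_empty] at hdel
    omega
  · have := h _ (by simp [Subgraph.edgeSet_deleteEdges]) h₀
    rw [Subgraph.deleteEdges_verts] at this
    omega

lemma mem_edgeSet_of_subIsCircuit22 (h : IsSparse22Off G e) {C : G.Subgraph}
    (hC : SubIsCircuit22 C) : e ∈ C.edgeSet := by
  by_contra he
  have := h C he hC.edgeSet_nonempty
  have := hC.1
  omega

lemma existsUnique_subIsCircuit22 [Finite V] (h : IsSparse22Off G e) (hne : G.edgeSet.Nonempty)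
    (htight : 2 * Nat.card V ≤ G.edgeSet.ncard + 1) : ∃! C : G.Subgraph, SubIsCircuit22 C := by
  obtain ⟨C, hC⟩ := exists_subIsCircuit22 h.ncard_edgeSet_add_one_le (H := ⊤) hne
    (by rwa [Subgraph.edgeSet_top, Subgraph.verts_top, ncard_univ])
  refine ⟨C, hC, fun C' hC' => ?_⟩
  have hC'e := h.mem_edgeSet_of_subIsCircuit22 hC'
  refine hC'.eq_of_edgeSet_inter_nonempty hC ⟨e, hC'e, h.mem_edgeSet_of_subIsCircuit22 hC⟩ ?_
  exact h.ncard_edgeSet_add_one_le _ ⟨e, by rw [Subgraph.edgeSet_sup]; exact Or.inl hC'e⟩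

end IsSparse22Off

lemma IsCircuit22.ncard_edgeSet_add_two_le_of_le_comap [Fintype V] (hG : IsCircuit22 G)
    {G' : SimpleGraph W} {f : W → V} (hf : Injective f) (hfs : ¬Surjective f) (K : G'.Subgraph)
    (hK : K.spanningCoe ≤ G.comap f) (hne : K.edgeSet.Nonempty) :
    K.edgeSet.ncard + 2 ≤ 2 * K.verts.ncard := by
  let K' : (G.comap f).Subgraph := { K with adj_sub := fun hab => hK hab }
  have hE : (K'.map (Hom.comap f G)).edgeSet.ncard = K.edgeSet.ncard := by
    rw [Subgraph.edgeSet_map]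
    exact ncard_image_of_injective _ (Sym2.map.injective hf)
  have hV : (K'.map (Hom.comap f G)).verts.ncard = K.verts.ncard :=
    ncard_image_of_injective _ hf
  have hproper : (K'.map (Hom.comap f G)).verts ≠ univ := fun h => hfs fun b => by
    obtain ⟨a, -, rfl⟩ := h ▸ mem_univ b
    exact ⟨a, rfl⟩
  rw [← hE, ← hV]
  exact hG.2 _ (Or.inl hproper) (by rw [Subgraph.edgeSet_map]; exact hne.image _)

end

/-- Let `G` be a `(2,2)`-circuit, `v` a degree-3 vertex with neighbours `x,y,z`
and `xy ∉ E`.  Then the graph `G' = G - v + xy` (on the vertex subtype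
`{u // u ≠ v}`) contains a unique `(2,2)`-circuit as a subgraph, and this unique
circuit is all of `G'` if and only if `G'` is itself a `(2,2)`-circuit. -/
theorem oneReduction_unique_circuit {V : Type*} [Fintype V] [DecidableEq V]
    (G : SimpleGraph V) [DecidableRel G.Adj] (hG : IsCircuit22 G)
    (v x y z : V) (hdeg : G.degree v = 3)
    (hnbr : G.neighborSet v = {x, y, z}) (hxy : ¬ G.Adj x y)
    (G' : SimpleGraph {u : V // u ≠ v})
    (hG' : ∀ a b : {u : V // u ≠ v}, G'.Adj a b ↔
      (G.Adj a.1 b.1 ∨ (a.1 = x ∧ b.1 = y) ∨ (a.1 = y ∧ b.1 = x))) :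
    (∃! H : G'.Subgraph, SubIsCircuit22 H) ∧
    (∀ H : G'.Subgraph, SubIsCircuit22 H → (H = ⊤ ↔ IsCircuit22 G')) := by
  have hvx : G.Adj v x := by simp [← mem_neighborSet, hnbr]
  have hvy : G.Adj v y := by simp [← mem_neighborSet, hnbr]
  set x' : {u : V // u ≠ v} := ⟨x, hvx.ne'⟩
  set y' : {u : V // u ≠ v} := ⟨y, hvy.ne'⟩
  have hx'y' : x' ≠ y' := fun h =>
    G'.irrefl ((hG' x' x').2 (Or.inr (Or.inl ⟨rfl, congrArg Subtype.val h⟩)))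
  obtain rfl : G' = G.comap Subtype.val ⊔ edge x' y' := by
    ext a b
    simp only [hG', SimpleGraph.sup_adj, comap_adj, edge_adj, Subtype.ext_iff]
    grind [Adj.ne]
  have hval : ¬Surjective (Subtype.val : {u // u ≠ v} → V) := fun h => by
    obtain ⟨a, ha⟩ := h v
    exact a.2 ha
  have hsparse : IsSparse22Off (G.comap Subtype.val ⊔ edge x' y') s(x', y') := fun K hK =>
    hG.ncard_edgeSet_add_two_le_of_le_comap Subtype.val_injective hval K
      (Subgraph.spanningCoe_sup_edge_le _ fun hadj => hK (Subgraph.mem_edgeSet.2 hadj))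
  have htight : 2 * Nat.card {u // u ≠ v} ≤
      (G.comap Subtype.val ⊔ edge x' y').edgeSet.ncard + 1 := by
    have hsup := ncard_edgeSet_sup_edge (G := G.comap Subtype.val) (s := x') (t := y') hxy hx'y'
    have hdel := G.ncard_edgeSet_comap_subtype_add_degree v
    have hverts : Fintype.card {u // u ≠ v} = Fintype.card V - 1 := Set.card_ne_eq v
    have hcount := hG.1
    rw [Nat.card_eq_fintype_card]
    omega
  obtain ⟨C, hC, huniq⟩ :=
    hsparse.existsUnique_subIsCircuit22 ⟨s(x', y'), by simp [hx'y']⟩ htight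
  refine ⟨⟨C, hC, huniq⟩, fun H hH => ⟨?_, fun h => ?_⟩⟩
  · rintro rfl
    exact subIsCircuit22_top_iff.1 hH
  · rw [huniq H hH, huniq ⊤ (subIsCircuit22_top_iff.2 h)]
end
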